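/- arXiv:1903.04534 — 13 statements merged into one kernel-verified Lean document; each statement's English description precedes it below -/
import Mathlib

section
/- Let S be a minimal separator in a graph G. Then for every vertex v ∈ S, the set S \ {v} is a minimal separator in the graph G − v. -/
open SimpleGraph

variable {V : Type*}

/-- `S` separates `a` from `b` in `G`: every walk from `a` to `b` meets `S`. -/
def Separates (G : SimpleGraph V) (S : Set V) (a b : V) : Prop :=
  ∀ p : G.Walk a b, ∃ v ∈ p.support, v ∈ S

/-- `S` is a minimal `a,b`-separator in `G`. -/
def IsMinSepPair (G : SimpleGraph V) (S : Set V) (a b : V) : Prop :=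
  a ≠ b ∧ ¬ G.Adj a b ∧ a ∉ S ∧ b ∉ S ∧ Separates G S a b ∧
    ∀ T : Set V, T ⊂ S → ¬ Separates G T a b

/-- `S` is a minimal separator in `G`. -/
def IsMinSep (G : SimpleGraph V) (S : Set V) : Prop :=
  ∃ a b, IsMinSepPair G S a b

/-- The number of minimal separators of `G`. -/
noncomputable def numMinSeps (G : SimpleGraph V) : ℕ :=
  Set.ncard {S : Set V | IsMinSep G S}

/-- A connected component `C` of `G - S` is `S`-full if every vertex of `S`
has a neighbor in `C`. -/
def IsFullComponent (G : SimpleGraph V) (S : Set V)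
    (C : (G.induce (Sᶜ : Set V)).ConnectedComponent) : Prop :=
  ∀ v ∈ S, ∃ w : (Sᶜ : Set V),
    (G.induce (Sᶜ : Set V)).connectedComponentMk w = C ∧ G.Adj v ↑w

/-- A walk in `G` whose support lies in `s` gives a walk in `G.induce s`. -/
lemma walk_induce {G : SimpleGraph V} {s : Set V} :
    ∀ {a b : V} (p : G.Walk a b), (∀ x ∈ p.support, x ∈ s) →
    ∀ (ha : a ∈ s) (hb : b ∈ s),
    ∃ q : (G.induce s).Walk ⟨a, ha⟩ ⟨b, hb⟩, ∀ x ∈ q.support, (x : V) ∈ p.support := by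
  intro a b p
  induction p with
  | nil =>
    intro _ ha _
    exact ⟨SimpleGraph.Walk.nil, by simp⟩
  | @cons a c b h p ih =>
    intro hp ha hb
    have hc : c ∈ s := hp c (by simp)
    obtain ⟨q, hq⟩ := ih (fun x hx => hp x (by simp [hx])) hc hb
    refine ⟨SimpleGraph.Walk.cons (by simpa using h) q, ?_⟩
    intro x hx
    rw [SimpleGraph.Walk.support_cons, List.mem_cons] at hx
    rcases hx with rfl | hx'
    · simp
    · simp [hq x hx']

theorem stmt1 (G : SimpleGraph V) (S : Set V) (hS : IsMinSep G S)
    (v : V) (hv : v ∈ S) :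
    IsMinSep (G.induce {u : V | u ≠ v}) {u : {u : V // u ≠ v} | (u : V) ∈ S} := by
  obtain ⟨a, b, hab, hnadj, haS, hbS, hsep, hmin⟩ := hS
  have ha : a ∈ {u : V | u ≠ v} := fun h => haS (h ▸ hv)
  have hb : b ∈ {u : V | u ≠ v} := fun h => hbS (h ▸ hv)
  refine ⟨⟨a, ha⟩, ⟨b, hb⟩, ?_, ?_, haS, hbS, ?_, ?_⟩
  · exact fun h => hab (congrArg Subtype.val h)
  · simpa using hnadj
  · -- Separates
    intro p
    have := hsep (p.map (SimpleGraph.Embedding.induce {u : V | u ≠ v}).toHom)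
    obtain ⟨x, hx, hxS⟩ := this
    have hx : x ∈ p.support.map (SimpleGraph.Embedding.induce (G := G) {u : V | u ≠ v}).toHom := by
      rw [← SimpleGraph.Walk.support_map]; exact hx
    rw [List.mem_map] at hx
    obtain ⟨y, hy, rfl⟩ := hx
    exact ⟨y, hy, hxS⟩
  · -- Minimality
    intro T hT hTsep
    set T' : Set V := (Subtype.val '' T) ∪ {v} with hT'
    have hT'S : T' ⊂ S := by
      constructor
      · rintro x (⟨y, hyT, rfl⟩ | rfl)
        · exact hT.1 hyT
        · exact hv
      · intro hST
        obtain ⟨u, huS, huT⟩ := Set.exists_of_ssubset hT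
        have : (u : V) ∈ T' := hST huS
        rcases this with ⟨y, hyT, hyu⟩ | h
        · exact huT (by rwa [Subtype.val_injective hyu] at hyT)
        · exact u.2 h
    have := hmin T' hT'S
    apply this
    intro p
    by_contra hcon
    push_neg at hcon
    have hsupp : ∀ x ∈ p.support, x ∈ {u : V | u ≠ v} := by
      intro x hx hxv
      exact hcon x hx (by simp [hT', hxv])
    obtain ⟨q, hq⟩ := walk_induce p hsupp ha hb
    obtain ⟨y, hy, hyT⟩ := hTsep q
    exact hcon y (hq y hy) (Or.inl ⟨y, hyT, rfl⟩)
end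

section
/- Let G be the join of graphs G_1, …, G_k (k ≥ 2), i.e., V(G) is the disjoint union of the V(G_i), with all edges between distinct parts. Then a set S ⊆ V(G) is a minimal separator of G if and only if there exist i ∈ {1,…,k} and a minimal separator S_i of G_i such that S = S_i ∪ (V(G) \ V(G_i)). Consequently, s(G) = s(G_1) + ⋯ + s(G_k). -/
open SimpleGraph

variable {V : Type*}

/-- The join of a family of graphs: all vertices in distinct parts are adjacent,
and within a part adjacency is as in that part's graph. -/
def SigmaJoin {ι : Type} {W : ι → Type} (G : ∀ i, SimpleGraph (W i)) :
    SimpleGraph (Σ i, W i) where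
  Adj x y := x.1 ≠ y.1 ∨
    ∃ (i : ι) (a b : W i), x = ⟨i, a⟩ ∧ y = ⟨i, b⟩ ∧ (G i).Adj a b
  symm := by
    constructor
    rintro ⟨i, a⟩ ⟨j, b⟩ (h | ⟨l, c, d, hx, hy, hadj⟩)
    · exact Or.inl (Ne.symm h)
    · exact Or.inr ⟨l, d, c, hy, hx, hadj.symm⟩
  loopless := by
    constructor
    rintro ⟨i, a⟩ (h | ⟨j, c, d, hx, hy, hadj⟩)
    · exact h rfl
    · rw [hx] at hy
      have hcd : c = d := by simpa using hy
      exact (G j).loopless.irrefl c (hcd ▸ hadj)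


section Aux

variable {ι : Type} {W : ι → Type} (G : ∀ i, SimpleGraph (W i))

lemma sj_adj_same {i : ι} {a b : W i} (h : (SigmaJoin G).Adj ⟨i,a⟩ ⟨i,b⟩) :
    (G i).Adj a b := by
  rcases h with h | ⟨j, c, d, h1, h2, hadj⟩
  · exact absurd rfl h
  · obtain ⟨rfl, h1'⟩ := Sigma.mk.inj_iff.mp h1
    obtain ⟨-, h2'⟩ := Sigma.mk.inj_iff.mp h2
    rw [eq_of_heq h1', eq_of_heq h2']
    exact hadj

def homInc (i : ι) : G i →g SigmaJoin G where
  toFun a := ⟨i, a⟩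
  map_rel' h := Or.inr ⟨i, _, _, rfl, rfl, h⟩

lemma proj_walk {i : ι} {x y : Σ i, W i} (p : (SigmaJoin G).Walk x y) :
    ∀ (_ : ∀ v ∈ p.support, v.1 = i) (a b : W i),
      x = ⟨i, a⟩ → y = ⟨i, b⟩ →
      ∃ q : (G i).Walk a b, ∀ v ∈ q.support, (⟨i, v⟩ : Σ i, W i) ∈ p.support := by
  induction p with
  | nil =>
    intro h a b hx hy
    obtain ⟨-, h'⟩ := Sigma.mk.inj_iff.mp (hx.symm.trans hy)
    obtain rfl := eq_of_heq h'
    exact ⟨Walk.nil, by intro v hv; simp at hv; subst hv; simp [← hx]⟩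
  | @cons u v w hadj p ih =>
    intro h a b hx hy
    subst hx
    have hv : v.1 = i := h v (by simp)
    obtain ⟨j, c⟩ := v
    obtain rfl : j = i := hv
    have hadjG : (G j).Adj a c := sj_adj_same G hadj
    obtain ⟨q, hq⟩ := ih (fun v hv' => h v (by simp [hv'])) c b rfl hy
    refine ⟨Walk.cons hadjG q, ?_⟩
    intro v hv'
    rw [Walk.support_cons] at hv' ⊢
    rcases List.mem_cons.mp hv' with rfl | hv'
    · exact List.mem_cons_self
    · exact List.mem_cons_of_mem _ (hq v hv')

/-- The set corresponding to a part-`i` separator. -/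
def FJ (i : ι) (Si : Set (W i)) : Set (Σ i, W i) :=
  (fun a => (⟨i, a⟩ : Σ i, W i)) '' Si ∪ {x : Σ i, W i | x.1 ≠ i}

lemma mem_FJ_same {i : ι} {Si : Set (W i)} {c : W i} :
    (⟨i, c⟩ : Σ i, W i) ∈ FJ i Si ↔ c ∈ Si := by
  constructor
  · rintro (⟨d, hd, hde⟩ | h)
    · obtain ⟨-, h'⟩ := Sigma.mk.inj_iff.mp hde
      rwa [← eq_of_heq h']
    · exact absurd rfl h
  · intro h; exact Or.inl ⟨c, h, rfl⟩

lemma mem_FJ_ne {i : ι} {Si : Set (W i)} {x : Σ i, W i} (h : x.1 ≠ i) :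
    x ∈ FJ i Si := Or.inr h

/-- Backward direction of the characterization, at the level of pairs. -/
lemma pair_to_join {i : ι} {Si : Set (W i)} {a b : W i}
    (h : IsMinSepPair (G i) Si a b) :
    IsMinSepPair (SigmaJoin G) (FJ i Si) ⟨i, a⟩ ⟨i, b⟩ := by
  obtain ⟨hne, hnadj, haS, hbS, hsep, hmin⟩ := h
  refine ⟨?_, fun h => hnadj (sj_adj_same G h), ?_, ?_, ?_, ?_⟩
  · intro h
    obtain ⟨-, h'⟩ := Sigma.mk.inj_iff.mp h
    exact hne (eq_of_heq h')
  · exact fun h => haS (mem_FJ_same.mp h)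
  · exact fun h => hbS (mem_FJ_same.mp h)
  · intro p
    by_cases hall : ∀ v ∈ p.support, v.1 = i
    · obtain ⟨q, hq⟩ := proj_walk G p hall a b rfl rfl
      obtain ⟨v, hv, hvS⟩ := hsep q
      exact ⟨⟨i, v⟩, hq v hv, mem_FJ_same.mpr hvS⟩
    · push_neg at hall
      obtain ⟨v, hv, hvi⟩ := hall
      exact ⟨v, hv, mem_FJ_ne hvi⟩
  · intro T hT hsepT
    have haT : (⟨i, a⟩ : Σ i, W i) ∉ T := fun h => haS (mem_FJ_same.mp (hT.1 h))
    have hbT : (⟨i, b⟩ : Σ i, W i) ∉ T := fun h => hbS (mem_FJ_same.mp (hT.1 h))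
    by_cases hrest : ∀ x : Σ i, W i, x.1 ≠ i → x ∈ T
    · set Ti : Set (W i) := {c : W i | (⟨i, c⟩ : Σ i, W i) ∈ T} with hTi_def
      have hTi_sub : Ti ⊆ Si := fun c hc => mem_FJ_same.mp (hT.1 hc)
      obtain ⟨s, hsS, hsT⟩ := Set.exists_of_ssubset hT
      obtain ⟨j, c⟩ := s
      have hij : i = j := by
        by_contra hij
        exact hsT (hrest _ fun h => hij h.symm)
      subst hij
      have hcSi : c ∈ Si := mem_FJ_same.mp hsS
      have hTi_ssub : Ti ⊂ Si := ⟨hTi_sub, fun h => hsT (h hcSi)⟩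
      apply hmin Ti hTi_ssub
      intro q
      obtain ⟨v, hv, hvT⟩ := hsepT (q.map (homInc G i))
      have hv : v ∈ (q.map (homInc G i)).support := hv
      rw [Walk.support_map] at hv
      obtain ⟨d, hd, rfl⟩ := List.mem_map.mp hv
      exact ⟨d, hd, hvT⟩
    · push_neg at hrest
      obtain ⟨v, hvi, hvT⟩ := hrest
      have h1 : (SigmaJoin G).Adj ⟨i, a⟩ v := Or.inl fun h => hvi h.symm
      have h2 : (SigmaJoin G).Adj v ⟨i, b⟩ := Or.inl hvi
      obtain ⟨u, hu, huT⟩ := hsepT (Walk.cons h1 (Walk.cons h2 Walk.nil))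
      simp only [Walk.support_cons, Walk.support_nil, List.mem_cons,
        List.mem_singleton, List.not_mem_nil, or_false] at hu
      rcases hu with rfl | rfl | rfl
      · exact haT huT
      · exact hvT huT
      · exact hbT huT

/-- Forward direction of the characterization. -/
lemma join_to_part {S : Set (Σ i, W i)} (h : IsMinSep (SigmaJoin G) S) :
    ∃ (i : ι) (Si : Set (W i)), IsMinSep (G i) Si ∧ S = FJ i Si := by
  obtain ⟨x, y, hne, hnadj, hxS, hyS, hsep, hmin⟩ := h
  have hfst : x.1 = y.1 := by
    by_contra h
    exact hnadj (Or.inl h)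
  obtain ⟨i, a⟩ := x
  obtain ⟨j, b⟩ := y
  obtain rfl : i = j := hfst
  have hnadjG : ¬ (G i).Adj a b := fun h => hnadj (Or.inr ⟨i, a, b, rfl, rfl, h⟩)
  have haneb : a ≠ b := fun h => hne (by rw [h])
  have hrest : ∀ v : Σ i, W i, v.1 ≠ i → v ∈ S := by
    intro v hv
    by_contra hvS
    have h1 : (SigmaJoin G).Adj ⟨i, a⟩ v := Or.inl fun h => hv h.symm
    have h2 : (SigmaJoin G).Adj v ⟨i, b⟩ := Or.inl hv
    obtain ⟨u, hu, huS⟩ := hsep (Walk.cons h1 (Walk.cons h2 Walk.nil))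
    simp only [Walk.support_cons, Walk.support_nil, List.mem_cons,
      List.mem_singleton, List.not_mem_nil, or_false] at hu
    rcases hu with rfl | rfl | rfl
    · exact hxS huS
    · exact hvS huS
    · exact hyS huS
  set Si : Set (W i) := {c : W i | (⟨i, c⟩ : Σ i, W i) ∈ S} with hSi_def
  have hSeq : S = FJ i Si := by
    ext ⟨j, c⟩
    by_cases hj : j = i
    · subst hj
      exact Iff.symm (mem_FJ_same (Si := Si))
    · constructor
      · intro _
        exact mem_FJ_ne (x := ⟨j, c⟩) hj
      · intro _
        exact hrest _ hj
  refine ⟨i, Si, ⟨a, b, haneb, hnadjG, hxS, hyS, ?_, ?_⟩, hSeq⟩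
  · intro q
    obtain ⟨v, hv, hvS⟩ := hsep (q.map (homInc G i))
    have hv : v ∈ (q.map (homInc G i)).support := hv
    rw [Walk.support_map] at hv
    obtain ⟨d, hd, rfl⟩ := List.mem_map.mp hv
    exact ⟨d, hd, hvS⟩
  · intro Ti hTi hsepTi
    have hsub : FJ i Ti ⊆ S := by
      rintro x (⟨c, hc, rfl⟩ | hx)
      · exact hTi.1 hc
      · exact hrest _ hx
    obtain ⟨c, hcS, hcT⟩ := Set.exists_of_ssubset hTi
    have hmem : (⟨i, c⟩ : Σ i, W i) ∈ S := hcS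
    have hnmem : (⟨i, c⟩ : Σ i, W i) ∉ FJ i Ti := fun h => hcT (mem_FJ_same.mp h)
    apply hmin (FJ i Ti) ⟨hsub, fun h => hnmem (h hmem)⟩
    intro p
    by_cases hall : ∀ v ∈ p.support, v.1 = i
    · obtain ⟨q, hq⟩ := proj_walk G p hall a b rfl rfl
      obtain ⟨v, hv, hvT⟩ := hsepTi q
      exact ⟨⟨i, v⟩, hq v hv, mem_FJ_same.mpr hvT⟩
    · push_neg at hall
      obtain ⟨v, hv, hvi⟩ := hall
      exact ⟨v, hv, mem_FJ_ne hvi⟩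

end Aux

theorem stmt3 {ι : Type} [Fintype ι] [Nontrivial ι] {W : ι → Type}
    [∀ i, Fintype (W i)] (G : ∀ i, SimpleGraph (W i)) :
    (∀ S : Set (Σ i, W i), IsMinSep (SigmaJoin G) S ↔
      ∃ (i : ι) (Si : Set (W i)), IsMinSep (G i) Si ∧
        S = (fun a => (⟨i, a⟩ : Σ i, W i)) '' Si ∪ {x : Σ i, W i | x.1 ≠ i}) ∧
    numMinSeps (SigmaJoin G) = ∑ i, numMinSeps (G i) := by
  classical
  have hiff : ∀ S : Set (Σ i, W i), IsMinSep (SigmaJoin G) S ↔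
      ∃ (i : ι) (Si : Set (W i)), IsMinSep (G i) Si ∧
        S = (fun a => (⟨i, a⟩ : Σ i, W i)) '' Si ∪ {x : Σ i, W i | x.1 ≠ i} := by
    intro S
    constructor
    · exact join_to_part G
    · rintro ⟨i, Si, ⟨a, b, hpair⟩, rfl⟩
      exact ⟨_, _, pair_to_join G hpair⟩
  refine ⟨hiff, ?_⟩
  -- counting
  have hg : Function.Bijective
      (fun x : Σ i, {Si : Set (W i) // IsMinSep (G i) Si} =>
        (⟨FJ x.1 x.2.1, (hiff _).mpr ⟨x.1, x.2.1, x.2.2, rfl⟩⟩ :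
          {S : Set (Σ i, W i) // IsMinSep (SigmaJoin G) S})) := by
    constructor
    · rintro ⟨i, Si, hSi⟩ ⟨j, Sj, hSj⟩ hEq
      have hEq' : FJ i Si = FJ j Sj := congrArg Subtype.val hEq
      obtain rfl : i = j := by
        by_contra hij
        obtain ⟨a, b, -, -, haS, -⟩ := hSi
        have h1 : (⟨i, a⟩ : Σ i, W i) ∉ FJ i Si := fun h => haS (mem_FJ_same.mp h)
        have h2 : (⟨i, a⟩ : Σ i, W i) ∈ FJ j Sj := mem_FJ_ne hij
        exact h1 (hEq' ▸ h2)
      have : Si = Sj := by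
        ext c
        rw [← mem_FJ_same (Si := Si), ← mem_FJ_same (Si := Sj), hEq']
      subst this
      rfl
    · rintro ⟨S, hS⟩
      obtain ⟨i, Si, hSi, rfl⟩ := join_to_part G hS
      exact ⟨⟨i, Si, hSi⟩, rfl⟩
  have hcard : Nat.card {S : Set (Σ i, W i) // IsMinSep (SigmaJoin G) S}
      = Nat.card (Σ i, {Si : Set (W i) // IsMinSep (G i) Si}) :=
    (Nat.card_eq_of_bijective _ hg).symm
  have hfin : ∀ i, Fintype {Si : Set (W i) // IsMinSep (G i) Si} := fun i =>
    Fintype.ofFinite _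
  rw [numMinSeps, ← Nat.card_coe_set_eq]
  have : ∀ i : ι, numMinSeps (G i) = Nat.card {Si : Set (W i) // IsMinSep (G i) Si} :=
    fun i => (Nat.card_coe_set_eq _).symm
  simp only [this]
  haveI := hfin
  calc Nat.card {S : Set (Σ i, W i) // IsMinSep (SigmaJoin G) S}
      = Nat.card (Σ i, {Si : Set (W i) // IsMinSep (G i) Si}) := hcard
    _ = ∑ i, Nat.card {Si : Set (W i) // IsMinSep (G i) Si} := by
        rw [Nat.card_eq_fintype_card, Fintype.card_sigma]
        exact Finset.sum_congr rfl fun i _ => Nat.card_eq_fintype_card.symm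
end

section
/- Let G be a graph with at least two vertices and let v be a universal vertex of G (adjacent to all other vertices). Then s(G) = s(G − v); more precisely, S is a minimal separator of G if and only if S = S' ∪ {v} for some minimal separator S' of G − v. -/
open SimpleGraph

variable {V : Type*}

section Aux

variable (G : SimpleGraph V) (s : Set V)

/-- The inclusion homomorphism from an induced subgraph. -/
def incHom : (G.induce s) →g G where
  toFun := Subtype.val
  map_rel' := fun h => h

lemma lift_walk : ∀ {a b : V} (p : G.Walk a b) (_ : ∀ x ∈ p.support, x ∈ s)
    (ha : a ∈ s) (hb : b ∈ s),
    ∃ q : (G.induce s).Walk ⟨a, ha⟩ ⟨b, hb⟩, ∀ x ∈ q.support, (x : V) ∈ p.support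
  | a, _, Walk.nil, _, ha, hb => by
      exact ⟨Walk.nil, by simp⟩
  | a, b, Walk.cons (v := c) h p, hp, ha, hb => by
      have hc : c ∈ s := hp c (by simp)
      obtain ⟨q, hq⟩ := lift_walk p (fun x hx => hp x (by simp [hx])) hc hb
      refine ⟨Walk.cons (by exact h : (G.induce s).Adj ⟨a, ha⟩ ⟨c, hc⟩) q, ?_⟩
      intro x hx
      change x ∈ (⟨a, ha⟩ : s) :: q.support at hx
      rcases List.mem_cons.mp hx with h1 | h1
      · subst h1; simp
      · simpa using Or.inr (hq x h1)

end Aux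

section Main

variable (G : SimpleGraph V) (v : V)

lemma minSep_iff (hv : ∀ w, w ≠ v → G.Adj v w) (S : Set V) :
    IsMinSep G S ↔
      ∃ S' : Set {u : V // u ≠ v}, IsMinSep (G.induce {u : V | u ≠ v}) S' ∧
        S = Subtype.val '' S' ∪ {v} := by
  constructor
  · rintro ⟨a, b, hab, hnadj, haS, hbS, hsep, hmin⟩
    have ha : a ≠ v := by
      rintro rfl
      exact hnadj (hv b (fun h => hab h.symm))
    have hb : b ≠ v := by
      rintro rfl
      exact hnadj (hv a hab).symm
    have hvS : v ∈ S := by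
      obtain ⟨x, hx, hxS⟩ := hsep (Walk.cons (hv a ha).symm (Walk.cons (hv b hb) Walk.nil))
      simp only [Walk.support_cons, Walk.support_nil, List.mem_cons,
        List.mem_singleton] at hx
      rcases hx with rfl | rfl | rfl | h
      · exact absurd hxS haS
      · exact hxS
      · exact absurd hxS hbS
      · exact absurd h List.not_mem_nil
    refine ⟨Subtype.val ⁻¹' S, ⟨⟨a, ha⟩, ⟨b, hb⟩, ?_, ?_, haS, hbS, ?_, ?_⟩, ?_⟩
    · exact fun h => hab (congrArg Subtype.val h)
    · exact hnadj
    · intro q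
      obtain ⟨x, hx, hxS⟩ := hsep (q.map (incHom G {u : V | u ≠ v}))
      change x ∈ (q.map (incHom G {u : V | u ≠ v})).support at hx
      rw [Walk.support_map] at hx
      obtain ⟨y, hy, hyx⟩ := List.mem_map.mp hx
      exact ⟨y, hy, by simp only [← hyx] at hxS; exact hxS⟩
    · intro T hT hTsep
      refine hmin (Subtype.val '' T ∪ {v}) ?_ ?_
      · constructor
        · rintro x (⟨y, hy, rfl⟩ | rfl)
          · exact hT.1 hy
          · exact hvS
        · intro hsub
          obtain ⟨z, hzS, hzT⟩ := Set.exists_of_ssubset hT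
          have : (z : V) ∈ Subtype.val '' T ∪ {v} := hsub hzS
          rcases this with ⟨y, hy, hyz⟩ | h
          · exact hzT (by rwa [Subtype.val_injective hyz] at hy)
          · exact z.2 h
      · intro p
        by_cases hvp : v ∈ p.support
        · exact ⟨v, hvp, Or.inr rfl⟩
        · have hps : ∀ x ∈ p.support, x ∈ {u : V | u ≠ v} := by
            intro x hx hxv; exact hvp (hxv ▸ hx)
          obtain ⟨q, hq⟩ := lift_walk G {u : V | u ≠ v} p hps ha hb
          obtain ⟨y, hy, hyT⟩ := hTsep q
          exact ⟨y, hq y hy, Or.inl ⟨y, hyT, rfl⟩⟩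
    · ext x
      constructor
      · intro hx
        by_cases hxv : x = v
        · exact Or.inr hxv
        · exact Or.inl ⟨⟨x, hxv⟩, hx, rfl⟩
      · rintro (⟨y, hy, rfl⟩ | rfl)
        · exact hy
        · exact hvS
  · rintro ⟨S', ⟨⟨a, ha⟩, ⟨b, hb⟩, hab, hnadj, haS, hbS, hsep, hmin⟩, rfl⟩
    have hab' : a ≠ b := fun h => hab (Subtype.ext h)
    have haS' : a ∉ Subtype.val '' S' ∪ {v} := by
      rintro (⟨y, hy, hya⟩ | h)
      · exact haS (by rwa [show y = ⟨a, ha⟩ from Subtype.ext hya] at hy)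
      · exact ha h
    have hbS' : b ∉ Subtype.val '' S' ∪ {v} := by
      rintro (⟨y, hy, hyb⟩ | h)
      · exact hbS (by rwa [show y = ⟨b, hb⟩ from Subtype.ext hyb] at hy)
      · exact hb h
    refine ⟨a, b, hab', hnadj, haS', hbS', ?_, ?_⟩
    · intro p
      by_cases hvp : v ∈ p.support
      · exact ⟨v, hvp, Or.inr rfl⟩
      · have hps : ∀ x ∈ p.support, x ∈ {u : V | u ≠ v} := by
          intro x hx hxv; exact hvp (hxv ▸ hx)
        obtain ⟨q, hq⟩ := lift_walk G {u : V | u ≠ v} p hps ha hb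
        obtain ⟨y, hy, hyS⟩ := hsep q
        exact ⟨y, hq y hy, Or.inl ⟨y, hyS, rfl⟩⟩
    · intro T hT hTsep
      by_cases hvT : v ∈ T
      · refine hmin (Subtype.val ⁻¹' T) ?_ ?_
        · constructor
          · intro x hx
            rcases hT.1 hx with ⟨y, hy, hyx⟩ | h
            · rwa [show y = x from Subtype.ext hyx] at hy
            · exact absurd h x.2
          · intro hsub
            obtain ⟨z, hzS, hzT⟩ := Set.exists_of_ssubset hT
            rcases hzS with ⟨y, hy, rfl⟩ | rfl
            · exact hzT (hsub hy)
            · exact hzT hvT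
        · intro q
          obtain ⟨x, hx, hxT⟩ := hTsep (q.map (incHom G {u : V | u ≠ v}))
          change x ∈ (q.map (incHom G {u : V | u ≠ v})).support at hx
          rw [Walk.support_map] at hx
          obtain ⟨y, hy, hyx⟩ := List.mem_map.mp hx
          exact ⟨y, hy, by simp only [← hyx] at hxT; exact hxT⟩
      · obtain ⟨x, hx, hxT⟩ :=
          hTsep (Walk.cons (hv a ha).symm (Walk.cons (hv b hb) Walk.nil))
        simp only [Walk.support_cons, Walk.support_nil, List.mem_cons,
          List.mem_singleton] at hx
        rcases hx with rfl | rfl | rfl | h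
        · exact haS' (hT.1 hxT)
        · exact hvT hxT
        · exact hbS' (hT.1 hxT)
        · exact absurd h List.not_mem_nil

end Main

theorem stmt4 (G : SimpleGraph V) [Fintype V] (h2 : 2 ≤ Fintype.card V)
    (v : V) (hv : ∀ w, w ≠ v → G.Adj v w) :
    numMinSeps G = numMinSeps (G.induce {u : V | u ≠ v}) ∧
    ∀ S : Set V, IsMinSep G S ↔
      ∃ S' : Set {u : V // u ≠ v}, IsMinSep (G.induce {u : V | u ≠ v}) S' ∧
        S = Subtype.val '' S' ∪ {v} := by
  have key := minSep_iff G v hv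
  refine ⟨?_, key⟩
  have himage : {S : Set V | IsMinSep G S} =
      (fun S' : Set {u : V // u ≠ v} => Subtype.val '' S' ∪ {v}) ''
        {S' | IsMinSep (G.induce {u : V | u ≠ v}) S'} := by
    ext S
    simp only [Set.mem_setOf_eq, Set.mem_image, key S]
    constructor
    · rintro ⟨S', h1, h2⟩; exact ⟨S', h1, h2.symm⟩
    · rintro ⟨S', h1, h2⟩; exact ⟨S', h1, h2.symm⟩
  have hinj : Function.Injective
      (fun S' : Set {u : V // u ≠ v} => Subtype.val '' S' ∪ {v}) := by
    intro S1 S2 h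
    replace h : Subtype.val '' S1 ∪ {v} = Subtype.val '' S2 ∪ {v} := h
    have : ∀ S : Set {u : V // u ≠ v},
        Subtype.val ⁻¹' (Subtype.val '' S ∪ {v}) = S := by
      intro S
      ext x
      simp only [Set.mem_preimage, Set.mem_union, Set.mem_singleton_iff]
      constructor
      · rintro (⟨y, hy, hyx⟩ | hx)
        · rwa [show y = x from Subtype.ext hyx] at hy
        · exact absurd hx x.2
      · intro hx; exact Or.inl ⟨x, hx, rfl⟩
    calc S1 = Subtype.val ⁻¹' (Subtype.val '' S1 ∪ {v}) := (this S1).symm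
    _ = Subtype.val ⁻¹' (Subtype.val '' S2 ∪ {v}) := by rw [h]
    _ = S2 := this S2
  rw [numMinSeps, numMinSeps, himage, Set.ncard_image_of_injective _ hinj]
  rfl
end

section
/- Let G be a graph and let v, w be vertices of G with N_G(v) \ {w} = N_G(w) \ {v}. If S is a minimal separator of G, then v ∈ S if and only if w ∈ S. -/
open SimpleGraph

variable {V : Type*}

lemma twin_walk [DecidableEq V] (G : SimpleGraph V) (v w : V)
    (h : G.neighborSet v \ {w} = G.neighborSet w \ {v}) :
    ∀ {a b : V} (p : G.Walk a b),
      ∃ q : G.Walk (if a = v then w else a) (if b = v then w else b),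
        ∀ x ∈ q.support, ∃ y ∈ p.support, (if y = v then w else y) = x := by
  intro a b p
  induction p with
  | nil =>
    refine ⟨SimpleGraph.Walk.nil, ?_⟩
    intro x hx
    simp only [SimpleGraph.Walk.support_nil, List.mem_singleton] at hx
    exact ⟨_, by simp, hx.symm⟩
  | @cons a c b hac p' ih =>
    obtain ⟨q', hq'⟩ := ih
    by_cases hfac : (if a = v then w else a) = (if c = v then w else c)
    · refine ⟨q'.copy hfac.symm rfl, ?_⟩
      intro x hx
      rw [SimpleGraph.Walk.support_copy] at hx
      obtain ⟨y, hy, hyx⟩ := hq' x hx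
      exact ⟨y, by simp [hy], hyx⟩
    · have hadj : G.Adj (if a = v then w else a) (if c = v then w else c) := by
        by_cases hav : a = v <;> by_cases hcv : c = v
        · exact absurd (hav ▸ hcv ▸ hac) (G.irrefl)
        · rw [if_pos hav, if_neg hcv] at hfac ⊢
          have hcw : c ≠ w := fun e => hfac e.symm
          have : c ∈ G.neighborSet v \ {w} := ⟨hav ▸ hac, hcw⟩
          rw [h] at this
          exact this.1
        · rw [if_neg hav, if_pos hcv] at hfac ⊢
          have haw : a ≠ w := hfac
          have : a ∈ G.neighborSet v \ {w} := ⟨(hcv ▸ hac).symm, haw⟩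
          rw [h] at this
          exact this.1.symm
        · simpa [if_neg hav, if_neg hcv] using hac
      refine ⟨SimpleGraph.Walk.cons hadj q', ?_⟩
      intro x hx
      rw [SimpleGraph.Walk.support_cons, List.mem_cons] at hx
      rcases hx with rfl | hx
      · exact ⟨a, by simp, rfl⟩
      · obtain ⟨y, hy, hyx⟩ := hq' x hx
        exact ⟨y, by simp [hy], hyx⟩

lemma twin_dir [DecidableEq V] (G : SimpleGraph V) (v w : V)
    (h : G.neighborSet v \ {w} = G.neighborSet w \ {v})
    (S : Set V) (hS : IsMinSep G S) (hv : v ∈ S) : w ∈ S := by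
  by_contra hw
  obtain ⟨a, b, hab, hadj, haS, hbS, hsep, hmin⟩ := hS
  have hsub : S \ {v} ⊂ S := Set.sdiff_singleton_ssubset.mpr hv
  have hns := hmin _ hsub
  rw [Separates] at hns
  push_neg at hns
  obtain ⟨p, hp⟩ := hns
  obtain ⟨q, hq⟩ := twin_walk G v w h p
  have hav : a ≠ v := fun e => haS (e ▸ hv)
  have hbv : b ≠ v := fun e => hbS (e ▸ hv)
  obtain ⟨x, hxq, hxS⟩ := hsep (q.copy (if_neg hav) (if_neg hbv))
  rw [SimpleGraph.Walk.support_copy] at hxq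
  obtain ⟨y, hyp, hyx⟩ := hq x hxq
  have hynot := hp y hyp
  by_cases hyv : y = v
  · rw [if_pos hyv] at hyx
    exact hw (hyx ▸ hxS)
  · rw [if_neg hyv] at hyx
    exact hynot ⟨hyx ▸ hxS, hyv⟩

theorem stmt5 (G : SimpleGraph V) (v w : V)
    (h : G.neighborSet v \ {w} = G.neighborSet w \ {v})
    (S : Set V) (hS : IsMinSep G S) :
    v ∈ S ↔ w ∈ S := by
  classical
  exact ⟨twin_dir G v w h S hS, twin_dir G w v h.symm S hS⟩
end

section
/- Let G be a graph having a pair of distinct true twins v, w (vertices with N_G[v] = N_G[w], i.e., adjacent vertices with the same closed neighborhood). Then s(G) = s(G − v). -/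
open SimpleGraph

variable {V : Type*}

lemma twin_adj {G : SimpleGraph V} {v w : V} (hvw : v ≠ w)
    (h : insert v (G.neighborSet v) = insert w (G.neighborSet w)) : G.Adj v w := by
  have hv : v ∈ insert w (G.neighborSet w) := h ▸ Set.mem_insert v _
  rcases hv with hv | hv
  · exact absurd hv hvw
  · exact hv.symm

lemma twin_adj_iff {G : SimpleGraph V} {v w : V}
    (h : insert v (G.neighborSet v) = insert w (G.neighborSet w))
    {x : V} (hxv : x ≠ v) (hxw : x ≠ w) : G.Adj v x ↔ G.Adj w x := by
  have hx := Set.ext_iff.mp h x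
  simp only [Set.mem_insert_iff, mem_neighborSet] at hx
  constructor
  · intro hh; rcases hx.mp (Or.inr hh) with h' | h'
    · exact absurd h' hxw
    · exact h'
  · intro hh; rcases hx.mpr (Or.inr hh) with h' | h'
    · exact absurd h' hxv
    · exact h'

lemma exists_walk_avoid_aux {G : SimpleGraph V} {v w : V} (hvw : v ≠ w)
    (h : insert v (G.neighborSet v) = insert w (G.neighborSet w)) {X : Set V} (hwX : w ∉ X) :
    ∀ (n : ℕ) {a b : V} (p : G.Walk a b), p.length ≤ n → a ≠ v → b ≠ v →
      (∀ x ∈ p.support, x ∉ X) →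
      ∃ q : G.Walk a b, ∀ x ∈ q.support, x ∉ X ∧ x ≠ v := by
  intro n
  induction n with
  | zero =>
    intro a b p hlen ha hb hp
    cases p with
    | nil => exact ⟨.nil, by simpa using ⟨hp a (by simp), ha⟩⟩
    | cons h' p' => simp at hlen
  | succ n ih =>
    intro a b p hlen ha hb hp
    cases p with
    | nil => exact ⟨.nil, by simpa using ⟨hp a (by simp), ha⟩⟩
    | @cons _ c _ hadj p' =>
      by_cases hc : c = v
      · obtain rfl : v = c := hc.symm
        cases p' with
        | nil => exact absurd rfl hb
        | @cons _ d _ hadj2 p'' =>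
          have hd : d ≠ v := hadj2.ne'
          have hdX : d ∉ X := hp d (by simp)
          have haX : a ∉ X := hp a (by simp)
          have hlen'' : p''.length ≤ n := by
            simp only [Walk.length_cons] at hlen; omega
          have hp'' : ∀ x ∈ p''.support, x ∉ X := fun x hx => hp x (by simp [hx])
          obtain ⟨q'', hq''⟩ := ih p'' hlen'' hd hb hp''
          by_cases had : a = d
          · subst had
            exact ⟨q'', hq''⟩
          · have hconn : ∃ r : G.Walk a d, ∀ x ∈ r.support, x ∉ X ∧ x ≠ v := by
              by_cases haw : a = w
              · have hdw : d ≠ w := fun hh => had (haw.trans hh.symm)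
                have hwd : G.Adj a d := by
                  rw [haw]; exact (twin_adj_iff h hd hdw).mp hadj2
                refine ⟨hwd.toWalk, ?_⟩
                intro x hx
                simp only [Adj.toWalk, Walk.support_cons, Walk.support_nil,
                  List.mem_cons, List.mem_singleton] at hx
                rcases hx with rfl | hx
                · exact ⟨haX, ha⟩
                · rcases hx with rfl | hx
                  · exact ⟨hdX, hd⟩
                  · simp at hx
              · have haw' : G.Adj w a := (twin_adj_iff h ha haw).mp hadj.symm
                by_cases hdw : d = w
                · have had' : G.Adj a d := by rw [hdw]; exact haw'.symm
                  refine ⟨had'.toWalk, ?_⟩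
                  intro x hx
                  simp only [Adj.toWalk, Walk.support_cons, Walk.support_nil,
                    List.mem_cons, List.mem_singleton] at hx
                  rcases hx with rfl | hx
                  · exact ⟨haX, ha⟩
                  · rcases hx with rfl | hx
                    · exact ⟨hdX, hd⟩
                    · simp at hx
                · have hwd : G.Adj w d := (twin_adj_iff h hd hdw).mp hadj2
                  refine ⟨.cons haw'.symm hwd.toWalk, ?_⟩
                  intro x hx
                  simp only [Adj.toWalk, Walk.support_cons, Walk.support_nil,
                    List.mem_cons, List.mem_singleton] at hx
                  rcases hx with rfl | rfl | rfl | hx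
                  · exact ⟨haX, ha⟩
                  · exact ⟨hwX, hvw.symm⟩
                  · exact ⟨hdX, hd⟩
                  · simp at hx
            obtain ⟨r, hr⟩ := hconn
            refine ⟨r.append q'', fun x hx => ?_⟩
            rcases (Walk.mem_support_append_iff _ _).mp hx with hx | hx
            · exact hr x hx
            · exact hq'' x hx
      · have hp' : ∀ x ∈ p'.support, x ∉ X := fun x hx => hp x (by simp [hx])
        have hlen' : p'.length ≤ n := by
          simp only [Walk.length_cons] at hlen; omega
        obtain ⟨q', hq'⟩ := ih p' hlen' hc hb hp'
        refine ⟨.cons hadj q', fun x hx => ?_⟩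
        simp only [Walk.support_cons, List.mem_cons] at hx
        rcases hx with rfl | hx
        · exact ⟨hp x (by simp), ha⟩
        · exact hq' x hx

lemma exists_walk_avoid {G : SimpleGraph V} {v w : V} (hvw : v ≠ w)
    (h : insert v (G.neighborSet v) = insert w (G.neighborSet w)) {X : Set V} (hwX : w ∉ X)
    {a b : V} (ha : a ≠ v) (hb : b ≠ v)
    (hreach : ∃ p : G.Walk a b, ∀ x ∈ p.support, x ∉ X) :
    ∃ q : G.Walk a b, ∀ x ∈ q.support, x ∉ X ∧ x ≠ v := by
  obtain ⟨p, hp⟩ := hreach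
  exact exists_walk_avoid_aux hvw h hwX p.length p le_rfl ha hb hp

lemma walk_toInduce {G : SimpleGraph V} {s : Set V} {a b : V} (p : G.Walk a b) :
    ∀ (ha : a ∈ s) (hb : b ∈ s), (∀ x ∈ p.support, x ∈ s) →
      ∃ q : (G.induce s).Walk ⟨a, ha⟩ ⟨b, hb⟩, ∀ x ∈ q.support, (x : V) ∈ p.support := by
  induction p with
  | nil => intro ha hb _; exact ⟨.nil, by simp⟩
  | @cons a c b hadj p' ih =>
    intro ha hb hp
    have hc : c ∈ s := hp c (by simp)
    obtain ⟨q', hq'⟩ := ih hc hb (fun x hx => hp x (by simp [hx]))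
    refine ⟨.cons (by simp [hadj]) q', fun x hx => ?_⟩
    simp only [Walk.support_cons, List.mem_cons] at hx ⊢
    rcases hx with rfl | hx
    · exact Or.inl rfl
    · exact Or.inr (hq' x hx)

lemma walk_ofInduce {G : SimpleGraph V} {s : Set V} {a b : s} (q : (G.induce s).Walk a b) :
    ∃ p : G.Walk ↑a ↑b, ∀ x ∈ p.support, ∃ y ∈ q.support, (y : V) = x := by
  refine ⟨q.map (Embedding.induce s).toHom, fun x hx => ?_⟩
  erw [Walk.support_map] at hx
  rcases List.mem_map.mp hx with ⟨y, hy, rfl⟩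
  exact ⟨y, hy, rfl⟩

lemma not_separates_iff {G : SimpleGraph V} {S : Set V} {a b : V} :
    ¬ Separates G S a b ↔ ∃ p : G.Walk a b, ∀ x ∈ p.support, x ∉ S := by
  unfold Separates; push_neg; rfl

lemma separates_symm {G : SimpleGraph V} {S : Set V} {a b : V}
    (hs : Separates G S a b) : Separates G S b a := by
  intro p
  obtain ⟨x, hx, hxS⟩ := hs p.reverse
  exact ⟨x, by rwa [Walk.support_reverse, List.mem_reverse] at hx, hxS⟩

lemma isMinSepPair_symm {G : SimpleGraph V} {S : Set V} {a b : V}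
    (hp : IsMinSepPair G S a b) : IsMinSepPair G S b a := by
  obtain ⟨h1, h2, h3, h4, h5, h6⟩ := hp
  exact ⟨h1.symm, fun hh => h2 hh.symm, h4, h3, separates_symm h5,
    fun T hT hsep => h6 T hT (separates_symm hsep)⟩

lemma twin_mem_iff {G : SimpleGraph V} {v w : V} (hvw : v ≠ w)
    (h : insert v (G.neighborSet v) = insert w (G.neighborSet w))
    {S : Set V} {a b : V} (hp : IsMinSepPair G S a b) : v ∈ S ↔ w ∈ S := by
  obtain ⟨h1, h2, h3, h4, h5, h6⟩ := hp
  constructor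
  · intro hv
    by_contra hw
    have hT : S \ {v} ⊂ S := ⟨Set.diff_subset, fun hsub => (hsub hv).2 rfl⟩
    obtain ⟨p, hps⟩ := not_separates_iff.mp (h6 _ hT)
    have hwX : w ∉ S \ {v} := fun hh => hw hh.1
    obtain ⟨q, hq⟩ := exists_walk_avoid hvw h hwX
      (fun hh : a = v => h3 (by rw [hh]; exact hv)) (fun hh : b = v => h4 (by rw [hh]; exact hv)) ⟨p, hps⟩
    obtain ⟨x, hx, hxS⟩ := h5 q
    exact (hq x hx).1 ⟨hxS, (hq x hx).2⟩
  · intro hw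
    by_contra hv
    have hT : S \ {w} ⊂ S := ⟨Set.diff_subset, fun hsub => (hsub hw).2 rfl⟩
    obtain ⟨p, hps⟩ := not_separates_iff.mp (h6 _ hT)
    have hvX : v ∉ S \ {w} := fun hh => hv hh.1
    obtain ⟨q, hq⟩ := exists_walk_avoid hvw.symm h.symm hvX
      (fun hh : a = w => h3 (by rw [hh]; exact hw)) (fun hh : b = w => h4 (by rw [hh]; exact hw)) ⟨p, hps⟩
    obtain ⟨x, hx, hxS⟩ := h5 q
    exact (hq x hx).1 ⟨hxS, (hq x hx).2⟩

lemma exists_minSepPair_ne {G : SimpleGraph V} {v w : V} (hvw : v ≠ w)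
    (h : insert v (G.neighborSet v) = insert w (G.neighborSet w))
    {S : Set V} (hS : IsMinSep G S) :
    ∃ a b, IsMinSepPair G S a b ∧ a ≠ v ∧ b ≠ v := by
  have hadjvw : G.Adj v w := twin_adj hvw h
  -- key step: shift an endpoint equal to v over to w
  have key : ∀ b : V, IsMinSepPair G S v b → IsMinSepPair G S w b := by
    intro b hp
    obtain ⟨h1, h2, h3, h4, h5, h6⟩ := hp
    have hbv : b ≠ v := h1.symm
    have hbw : b ≠ w := fun hh => h2 (hh ▸ hadjvw)
    have hwS : w ∉ S := by
      intro hwS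
      exact h3 ((twin_mem_iff hvw h ⟨h1, h2, h3, h4, h5, h6⟩).mpr hwS)
    refine ⟨fun hh => hbw hh.symm, fun hh => h2 ((twin_adj_iff h hbv hbw).mpr hh),
      hwS, h4, ?_, ?_⟩
    · intro p
      obtain ⟨x, hx, hxS⟩ := h5 (Walk.cons hadjvw p)
      simp only [Walk.support_cons, List.mem_cons] at hx
      rcases hx with rfl | hx
      · exact absurd hxS h3
      · exact ⟨x, hx, hxS⟩
    · intro T hT hsep
      refine h6 T hT ?_
      intro p
      obtain ⟨x, hx, hxT⟩ := hsep (Walk.cons hadjvw.symm p)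
      simp only [Walk.support_cons, List.mem_cons] at hx
      rcases hx with rfl | hx
      · exact absurd (hT.1 hxT) hwS
      · exact ⟨x, hx, hxT⟩
  obtain ⟨a, b, hp⟩ := hS
  by_cases hav : a = v
  · subst hav
    exact ⟨w, b, key b hp, hvw.symm, hp.1.symm⟩
  · by_cases hbv : b = v
    · subst hbv
      exact ⟨w, a, key a (isMinSepPair_symm hp), hvw.symm, hav⟩
    · exact ⟨a, b, hp, hav, hbv⟩

lemma mapsTo_down {G : SimpleGraph V} {v w : V} (hvw : v ≠ w)
    (h : insert v (G.neighborSet v) = insert w (G.neighborSet w))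
    {S : Set V} (hS : IsMinSep G S) :
    IsMinSep (G.induce {u : V | u ≠ v}) (Subtype.val ⁻¹' S) := by
  obtain ⟨a, b, hp, hav, hbv⟩ := exists_minSepPair_ne hvw h hS
  obtain ⟨h1, h2, h3, h4, h5, h6⟩ := hp
  have hwS_iff := twin_mem_iff hvw h ⟨h1, h2, h3, h4, h5, h6⟩
  refine ⟨⟨a, hav⟩, ⟨b, hbv⟩, fun hh => h1 (congrArg Subtype.val hh),
    by simpa using h2, h3, h4, ?_, ?_⟩
  · -- separates
    intro q
    obtain ⟨p, hpm⟩ := walk_ofInduce q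
    obtain ⟨x, hx, hxS⟩ := h5 p
    obtain ⟨y, hy, rfl⟩ := hpm x hx
    exact ⟨y, hy, hxS⟩
  · -- minimality
    intro T' hT' hsep'
    by_cases hv : v ∈ S
    · -- Case II : v ∈ S
      set T : Set V := Subtype.val '' T' ∪ {v} with hTdef
      have hTsub : T ⊆ S := by
        rintro x (⟨y, hyT', rfl⟩ | rfl)
        · exact hT'.1 hyT'
        · exact hv
      have hTss : T ⊂ S := by
        refine ⟨hTsub, fun hsub => ?_⟩
        obtain ⟨y, hyS, hyT'⟩ := Set.exists_of_ssubset hT'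
        have : (y : V) ∈ T := hsub hyS
        rcases this with ⟨z, hz, hzy⟩ | hyv
        · exact hyT' (Subtype.val_injective hzy ▸ hz)
        · exact y.2 hyv
      obtain ⟨p, hps⟩ := not_separates_iff.mp (h6 T hTss)
      have hmem : ∀ x ∈ p.support, x ∈ {u : V | u ≠ v} := by
        intro x hx hxv
        exact hps x hx (by rw [hxv]; exact Or.inr rfl)
      obtain ⟨q, hq⟩ := walk_toInduce p hav hbv hmem
      obtain ⟨y, hy, hyT'⟩ := hsep' q
      exact hps _ (hq y hy) (Or.inl ⟨y, hyT', rfl⟩)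
    · -- Case I : v ∉ S
      have hw : w ∉ S := fun hwS => hv (hwS_iff.mpr hwS)
      set T : Set V := Subtype.val '' T' with hTdef
      have hTsub : T ⊆ S := by
        rintro x ⟨y, hyT', rfl⟩
        exact hT'.1 hyT'
      have hTss : T ⊂ S := by
        refine ⟨hTsub, fun hsub => ?_⟩
        obtain ⟨y, hyS, hyT'⟩ := Set.exists_of_ssubset hT'
        obtain ⟨z, hz, hzy⟩ := hsub hyS
        exact hyT' (Subtype.val_injective hzy ▸ hz)
      obtain ⟨p, hps⟩ := not_separates_iff.mp (h6 T hTss)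
      have hwT : w ∉ T := fun hh => hw (hTsub hh)
      obtain ⟨q, hq⟩ := exists_walk_avoid hvw h hwT hav hbv ⟨p, hps⟩
      have hmem : ∀ x ∈ q.support, x ∈ {u : V | u ≠ v} := fun x hx => (hq x hx).2
      obtain ⟨q', hq'⟩ := walk_toInduce q hav hbv hmem
      obtain ⟨y, hy, hyT'⟩ := hsep' q'
      exact (hq _ (hq' y hy)).1 ⟨y, hyT', rfl⟩

lemma surj_up {G : SimpleGraph V} {v w : V} (hvw : v ≠ w)
    (h : insert v (G.neighborSet v) = insert w (G.neighborSet w))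
    {S' : Set ↥({u : V | u ≠ v})} (hS' : IsMinSep (G.induce {u : V | u ≠ v}) S') :
    ∃ S : Set V, IsMinSep G S ∧ Subtype.val ⁻¹' S = S' := by
  obtain ⟨a', b', h1, h2, h3, h4, h5, h6⟩ := hS'
  have hnadj : ¬ G.Adj ↑a' ↑b' := by simpa using h2
  have hne : (a' : V) ≠ ↑b' := fun hh => h1 (Subtype.val_injective hh)
  set w' : ↥({u : V | u ≠ v}) := ⟨w, hvw.symm⟩ with hw'def
  by_cases hwS' : w' ∈ S'
  · -- Case B : w ∈ S'
    refine ⟨insert v (Subtype.val '' S'), ⟨↑a', ↑b', hne, hnadj, ?_, ?_, ?_, ?_⟩, ?_⟩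
    · rintro (hh | ⟨y, hy, hyv⟩)
      · exact a'.2 hh
      · exact h3 (Subtype.val_injective hyv ▸ hy)
    · rintro (hh | ⟨y, hy, hyv⟩)
      · exact b'.2 hh
      · exact h4 (Subtype.val_injective hyv ▸ hy)
    · -- separates
      intro p
      by_contra hcon
      push_neg at hcon
      have hmem : ∀ x ∈ p.support, x ∈ {u : V | u ≠ v} := by
        intro x hx hxv
        exact hcon x hx (by rw [hxv]; exact Or.inl rfl)
      obtain ⟨q, hq⟩ := walk_toInduce p a'.2 b'.2 hmem
      obtain ⟨y, hy, hyS'⟩ := h5 q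
      exact hcon _ (hq y hy) (Or.inr ⟨y, hyS', rfl⟩)
    · -- minimality
      intro T hT
      rw [not_separates_iff]
      have hT'sub : Subtype.val ⁻¹' T ⊆ S' := by
        intro y hy
        rcases hT.1 hy with hh | ⟨z, hz, hzy⟩
        · exact absurd hh y.2
        · exact Subtype.val_injective hzy ▸ hz
      by_cases hT'ss : Subtype.val ⁻¹' T ⊂ S'
      · obtain ⟨q, hqs⟩ := not_separates_iff.mp (h6 _ hT'ss)
        obtain ⟨p, hpm⟩ := walk_ofInduce q
        refine ⟨p, fun x hx hxT => ?_⟩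
        obtain ⟨y, hy, rfl⟩ := hpm x hx
        exact hqs y hy hxT
      · -- T restricted equals S'
        have hTeq : Subtype.val ⁻¹' T = S' := by
          rcases Set.ssubset_iff_of_subset hT'sub |>.not.mp hT'ss with hh
          push_neg at hh
          exact Set.Subset.antisymm hT'sub hh
        have hvT : v ∉ T := by
          intro hvT
          refine hT.2 ?_
          rintro x (rfl | ⟨y, hy, rfl⟩)
          · exact hvT
          · rw [← hTeq] at hy; exact hy
        have hTsubS : T ⊆ Subtype.val '' S' := by
          intro x hx
          rcases hT.1 hx with rfl | hh
          · exact absurd hx hvT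
          · exact hh
        -- use minimality of S' at S' \ {w'}
        have hss : S' \ {w'} ⊂ S' := ⟨Set.diff_subset, fun hsub => (hsub hwS').2 rfl⟩
        obtain ⟨q, hqs⟩ := not_separates_iff.mp (h6 _ hss)
        obtain ⟨p, hpm⟩ := walk_ofInduce q
        have hpX : ∀ x ∈ p.support, x ∉ (Subtype.val '' S') \ {w} := by
          rintro x hx ⟨⟨y, hy, rfl⟩, hxw⟩
          obtain ⟨z, hz, hzy⟩ := hpm _ hx
          have : z = y := Subtype.val_injective hzy
          subst this
          exact hqs z hz ⟨hy, fun hh => hxw (congrArg Subtype.val hh)⟩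
        have hvX : v ∉ (Subtype.val '' S') \ {w} := by
          rintro ⟨⟨y, hy, hyv⟩, -⟩
          exact y.2 hyv
        have haw : (a' : V) ≠ w := fun hh =>
          h3 (by rw [show a' = w' from Subtype.ext hh]; exact hwS')
        have hbw : (b' : V) ≠ w := fun hh =>
          h4 (by rw [show b' = w' from Subtype.ext hh]; exact hwS')
        obtain ⟨q2, hq2⟩ := exists_walk_avoid hvw.symm h.symm hvX haw hbw ⟨p, hpX⟩
        refine ⟨q2, fun x hx hxT => ?_⟩
        have hxS' : x ∈ Subtype.val '' S' := hTsubS hxT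
        have := (hq2 x hx)
        exact this.1 ⟨hxS', this.2⟩
    · -- preimage equality
      ext y
      simp only [Set.mem_preimage, Set.mem_insert_iff, Set.mem_image]
      constructor
      · rintro (hh | ⟨z, hz, hzy⟩)
        · exact absurd hh y.2
        · exact Subtype.val_injective hzy ▸ hz
      · intro hy
        exact Or.inr ⟨y, hy, rfl⟩

  · -- Case A : w ∉ S'
    have hwImg : w ∉ Subtype.val '' S' := by
      rintro ⟨y, hy, hyw⟩
      rw [show y = w' from Subtype.ext hyw] at hy
      exact hwS' hy
    refine ⟨Subtype.val '' S', ⟨↑a', ↑b', hne, hnadj, ?_, ?_, ?_, ?_⟩, ?_⟩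
    · rintro ⟨y, hy, hyv⟩
      exact h3 (Subtype.val_injective hyv ▸ hy)
    · rintro ⟨y, hy, hyv⟩
      exact h4 (Subtype.val_injective hyv ▸ hy)
    · -- separates
      intro p
      by_contra hcon
      push_neg at hcon
      obtain ⟨q, hq⟩ := exists_walk_avoid hvw h hwImg a'.2 b'.2 ⟨p, hcon⟩
      have hmem : ∀ x ∈ q.support, x ∈ {u : V | u ≠ v} := fun x hx => (hq x hx).2
      obtain ⟨q', hq'⟩ := walk_toInduce q a'.2 b'.2 hmem
      obtain ⟨y, hy, hyS'⟩ := h5 q'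
      exact (hq _ (hq' y hy)).1 ⟨y, hyS', rfl⟩
    · -- minimality
      intro T hT
      rw [not_separates_iff]
      have hT'ss : Subtype.val ⁻¹' T ⊂ S' := by
        constructor
        · intro y hy
          obtain ⟨z, hz, hzy⟩ := hT.1 hy
          exact Subtype.val_injective hzy ▸ hz
        · intro hsub
          obtain ⟨x, hxS, hxT⟩ := Set.exists_of_ssubset hT
          obtain ⟨y, hy, rfl⟩ := hxS
          exact hxT (hsub hy)
      obtain ⟨q, hqs⟩ := not_separates_iff.mp (h6 _ hT'ss)
      obtain ⟨p, hpm⟩ := walk_ofInduce q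
      refine ⟨p, fun x hx hxT => ?_⟩
      obtain ⟨y, hy, rfl⟩ := hpm x hx
      exact hqs y hy hxT
    · -- preimage equality
      exact Set.preimage_image_eq S' Subtype.val_injective

theorem stmt6 (G : SimpleGraph V) [Fintype V] (v w : V) (hvw : v ≠ w)
    (h : insert v (G.neighborSet v) = insert w (G.neighborSet w)) :
    numMinSeps G = numMinSeps (G.induce {u : V | u ≠ v}) := by
  classical
  have hbij : Set.BijOn (fun S : Set V => (Subtype.val ⁻¹' S : Set ↥({u : V | u ≠ v})))
      {S : Set V | IsMinSep G S}
      {S : Set ↥({u : V | u ≠ v}) | IsMinSep (G.induce {u : V | u ≠ v}) S} := by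
    refine ⟨fun S hS => mapsTo_down hvw h hS, ?_, ?_⟩
    · -- InjOn
      intro S1 hS1 S2 hS2 heq
      have heq' : (Subtype.val ⁻¹' S1 : Set ↥({u : V | u ≠ v})) = Subtype.val ⁻¹' S2 := heq
      ext x
      by_cases hxv : x = v
      · rw [hxv]
        have e1 := twin_mem_iff hvw h (hS1.choose_spec.choose_spec)
        have e2 := twin_mem_iff hvw h (hS2.choose_spec.choose_spec)
        rw [e1, e2]
        have : (⟨w, hvw.symm⟩ : ↥({u : V | u ≠ v})) ∈ Subtype.val ⁻¹' S1 ↔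
            (⟨w, hvw.symm⟩ : ↥({u : V | u ≠ v})) ∈ Subtype.val ⁻¹' S2 := by rw [heq']
        exact this
      · have : (⟨x, hxv⟩ : ↥({u : V | u ≠ v})) ∈ Subtype.val ⁻¹' S1 ↔
            (⟨x, hxv⟩ : ↥({u : V | u ≠ v})) ∈ Subtype.val ⁻¹' S2 := by rw [heq']
        exact this
    · -- SurjOn
      intro S' hS'
      obtain ⟨S, hSmin, hpre⟩ := surj_up hvw h hS'
      exact ⟨S, hSmin, hpre⟩
  calc numMinSeps G
      = ((fun S : Set V => (Subtype.val ⁻¹' S : Set ↥({u : V | u ≠ v}))) ''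
          {S : Set V | IsMinSep G S}).ncard :=
        (Set.ncard_image_of_injOn hbij.injOn).symm
    _ = numMinSeps (G.induce {u : V | u ≠ v}) := by rw [hbij.image_eq]; rfl
end

section
/- Let G be a graph and let v be a simplicial vertex of G (a vertex whose neighborhood is a clique). Then s(G − v) ≤ s(G) ≤ s(G − v) + 1. Moreover, every minimal separator of G is either a minimal separator of G − v or equal to N_G(v). -/
open SimpleGraph

variable {V : Type*}

section Aux

variable {G : SimpleGraph V} {v : V}

private lemma shortcut (hsimp : ∀ a ∈ G.neighborSet v, ∀ b ∈ G.neighborSet v, a ≠ b → G.Adj a b) :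
    ∀ (n : ℕ) {a b : V} (p : G.Walk a b), p.length ≤ n → ∀ (ha : a ≠ v) (hb : b ≠ v),
    ∃ q : (G.induce {u : V | u ≠ v}).Walk ⟨a, ha⟩ ⟨b, hb⟩,
      ∀ u ∈ q.support, (u : V) ∈ p.support := by
  intro n
  induction n with
  | zero =>
    intro a b p hlen ha hb
    cases p with
    | nil => exact ⟨.nil, by simp⟩
    | cons h p' => simp [SimpleGraph.Walk.length_cons] at hlen
  | succ n ih =>
    intro a b p hlen ha hb
    cases p with
    | nil => exact ⟨.nil, by simp⟩
    | @cons _ c _ h p' =>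
      by_cases hc : c = v
      · subst hc
        cases p' with
        | nil => exact absurd rfl hb
        | @cons _ d _ h2 p'' =>
          have hlen'' : p''.length ≤ n := by
            simp [SimpleGraph.Walk.length_cons] at hlen; omega
          obtain ⟨q', hq'⟩ := ih p'' hlen'' h2.ne' hb
          by_cases had : a = d
          · subst had
            refine ⟨q', fun u hu => ?_⟩
            simp only [SimpleGraph.Walk.support_cons, List.mem_cons]
            exact Or.inr (Or.inr (hq' u hu))
          · have hadj : G.Adj a d := hsimp a h.symm d h2 had
            refine ⟨.cons (by simpa using hadj) q', fun u hu => ?_⟩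
            simp only [SimpleGraph.Walk.support_cons, List.mem_cons] at hu ⊢
            rcases hu with rfl | hu
            · exact Or.inl rfl
            · exact Or.inr (Or.inr (hq' u hu))
      · have hlen' : p'.length ≤ n := by
          simp [SimpleGraph.Walk.length_cons] at hlen; omega
        obtain ⟨q', hq'⟩ := ih p' hlen' hc hb
        refine ⟨.cons (by simpa using h) q', fun u hu => ?_⟩
        simp only [SimpleGraph.Walk.support_cons, List.mem_cons] at hu ⊢
        rcases hu with rfl | hu
        · exact Or.inl rfl
        · exact Or.inr (hq' u hu)

end Aux

section Aux2

variable {G : SimpleGraph V} {v : V}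

private lemma sep_symm {S : Set V} {a b : V} (h : Separates G S a b) : Separates G S b a :=
  fun p => by
    obtain ⟨u, hu, huS⟩ := h p.reverse
    exact ⟨u, by simpa using hu, huS⟩

private lemma pair_symm {S : Set V} {a b : V} (h : IsMinSepPair G S a b) :
    IsMinSepPair G S b a := by
  obtain ⟨h1, h2, h3, h4, h5, h6⟩ := h
  exact ⟨h1.symm, fun e => h2 e.symm, h4, h3, sep_symm h5,
    fun T hT hsep => h6 T hT (sep_symm hsep)⟩

private lemma mem_map_support {s : Set V} {a b : s} {q : (G.induce s).Walk a b} {u : V}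
    (hu : u ∈ ((q.map (SimpleGraph.Embedding.induce s).toHom).support)) :
    ∃ w ∈ q.support, (w : V) = u := by
  rw [SimpleGraph.Walk.support_map] at hu
  exact List.mem_map.1 hu

private lemma val_mem_map_support {s : Set V} {a b : s} {q : (G.induce s).Walk a b}
    {w : s} (hw : w ∈ q.support) :
    (w : V) ∈ (q.map (SimpleGraph.Embedding.induce s).toHom).support := by
  rw [SimpleGraph.Walk.support_map]
  exact List.mem_map.2 ⟨w, hw, rfl⟩

/-- restriction of a proper subset is a proper subset -/
private lemma image_ssubset {S : Set V} (hvS : v ∉ S)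
    {T' : Set {u : V // u ≠ v}} (hT' : T' ⊂ {u : {u : V // u ≠ v} | (u : V) ∈ S}) :
    Subtype.val '' T' ⊂ S := by
  constructor
  · rintro x ⟨u, hu, rfl⟩
    exact hT'.1 hu
  · intro hsub
    apply hT'.2
    intro u hu
    obtain ⟨w, hw, hwu⟩ := hsub hu
    rwa [show w = u from Subtype.ext hwu] at hw

private lemma sep_restrict {S : Set V} {a b : V} (hsep : Separates G S a b) (hvS : v ∉ S)
    (ha : a ≠ v) (hb : b ≠ v) :
    Separates (G.induce {u : V | u ≠ v}) {u : {u : V // u ≠ v} | (u : V) ∈ S} ⟨a, ha⟩ ⟨b, hb⟩ := by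
  intro q
  obtain ⟨u, hu, huS⟩ := hsep (q.map (SimpleGraph.Embedding.induce _).toHom)
  obtain ⟨w, hw, rfl⟩ := mem_map_support hu
  exact ⟨w, hw, huS⟩

end Aux2

section Aux3

variable {G : SimpleGraph V} {v : V}

/-- A minimal separator pair in `G - v` lifts to `G`. -/
private lemma lift_pair (hsimp : ∀ a ∈ G.neighborSet v, ∀ b ∈ G.neighborSet v, a ≠ b → G.Adj a b)
    {S' : Set {u : V // u ≠ v}} {a' b' : {u : V // u ≠ v}}
    (h : IsMinSepPair (G.induce {u : V | u ≠ v}) S' a' b') :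
    IsMinSepPair G (Subtype.val '' S') ↑a' ↑b' := by
  obtain ⟨hne, hadj, haS, hbS, hsep, hmin⟩ := h
  refine ⟨fun e => hne (Subtype.ext e), fun e => hadj (by simpa using e), ?_, ?_, ?_, ?_⟩
  · rintro ⟨u, hu, he⟩
    exact haS (by rwa [show u = a' from Subtype.ext he] at hu)
  · rintro ⟨u, hu, he⟩
    exact hbS (by rwa [show u = b' from Subtype.ext he] at hu)
  · intro p
    obtain ⟨q, hq⟩ := shortcut hsimp p.length p le_rfl a'.2 b'.2
    obtain ⟨w, hw, hwS⟩ := hsep q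
    exact ⟨↑w, hq w hw, ⟨w, hwS, rfl⟩⟩
  · intro T hT hsepT
    set T' : Set {u : V // u ≠ v} := {u | (u : V) ∈ T} with hT'def
    have hT'S : T' ⊂ S' := by
      constructor
      · intro u hu
        obtain ⟨w, hw, hwu⟩ := hT.1 hu
        rwa [show w = u from Subtype.ext hwu] at hw
      · intro hsub
        apply hT.2
        rintro x ⟨u, hu, rfl⟩
        exact hsub hu
    apply hmin T' hT'S
    intro q
    obtain ⟨u, hu, huT⟩ := hsepT (q.map (SimpleGraph.Embedding.induce _).toHom)
    obtain ⟨w, hw, rfl⟩ := mem_map_support hu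
    exact ⟨w, hw, huT⟩

/-- A simplicial vertex belongs to no minimal separator. -/
private lemma v_not_mem (hsimp : ∀ a ∈ G.neighborSet v, ∀ b ∈ G.neighborSet v, a ≠ b → G.Adj a b)
    {S : Set V} (hS : IsMinSep G S) : v ∉ S := by
  intro hv
  obtain ⟨a, b, hne, hadj, haS, hbS, hsep, hmin⟩ := hS
  have h1 : ¬ Separates G (S \ {v}) a b := hmin _ (Set.sdiff_singleton_ssubset.2 hv)
  rw [Separates] at h1; push_neg at h1
  obtain ⟨p, hp⟩ := h1
  have ha : a ≠ v := fun e => haS (e ▸ hv)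
  have hb : b ≠ v := fun e => hbS (e ▸ hv)
  obtain ⟨q, hq⟩ := shortcut hsimp p.length p le_rfl ha hb
  obtain ⟨u, hu, huS⟩ := hsep (q.map (SimpleGraph.Embedding.induce _).toHom)
  obtain ⟨w, hw, rfl⟩ := mem_map_support hu
  exact hp _ (hq w hw) ⟨huS, w.2⟩

end Aux3

section Aux4

variable {G : SimpleGraph V} {v : V}

private lemma dichotomy
    (hsimp : ∀ a ∈ G.neighborSet v, ∀ b ∈ G.neighborSet v, a ≠ b → G.Adj a b)
    {S : Set V} (hS : IsMinSep G S) :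
    (v ∉ S ∧ IsMinSep (G.induce {u : V | u ≠ v}) {u : {u : V // u ≠ v} | (u : V) ∈ S})
      ∨ S = G.neighborSet v := by
  have hvS : v ∉ S := v_not_mem hsimp hS
  obtain ⟨a, b, hpair0⟩ := hS
  obtain ⟨a, b, hpair, hb⟩ : ∃ a b, IsMinSepPair G S a b ∧ b ≠ v := by
    by_cases hbv : b = v
    · exact ⟨b, a, pair_symm hpair0, fun e => hpair0.1 (e.trans hbv.symm)⟩
    · exact ⟨a, b, hpair0, hbv⟩
  obtain ⟨hne, hadj, haS, hbS, hsep, hmin⟩ := hpair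
  by_cases hav : a = v
  · subst hav
    by_cases hNS : G.neighborSet a ⊆ S
    · right
      apply Set.Subset.antisymm ?_ hNS
      intro s hs
      have h1 : ¬ Separates G (S \ {s}) a b := hmin _ (Set.sdiff_singleton_ssubset.2 hs)
      rw [Separates] at h1; push_neg at h1
      obtain ⟨p, hp⟩ := h1
      cases p with
      | nil => exact absurd rfl hne
      | @cons _ c _ h p' =>
        have hcS : c ∈ S := hNS h
        have hc : c ∉ S \ {s} := hp c (by simp [SimpleGraph.Walk.support_cons])
        have hcs : c = s := by by_contra hcs; exact hc ⟨hcS, hcs⟩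
        rw [← hcs]
        exact h
    · left
      refine ⟨hvS, ?_⟩
      rw [Set.not_subset] at hNS
      obtain ⟨x, hxN, hxS⟩ := hNS
      have hx : G.Adj a x := hxN
      have hxv : x ≠ a := hx.ne'
      have hxb_nadj : ¬ G.Adj x b := by
        intro e
        obtain ⟨u, hu, huS⟩ := hsep (Walk.cons hx (Walk.cons e Walk.nil))
        simp only [SimpleGraph.Walk.support_cons, SimpleGraph.Walk.support_nil,
          List.mem_cons, List.mem_singleton] at hu
        rcases hu with rfl | rfl | rfl | h'
        exacts [absurd huS hvS, absurd huS hxS, absurd huS hbS, by simp at h']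
      have hxb : x ≠ b := by
        intro e
        subst e
        obtain ⟨u, hu, huS⟩ := hsep (Walk.cons hx Walk.nil)
        simp only [SimpleGraph.Walk.support_cons, SimpleGraph.Walk.support_nil,
          List.mem_cons, List.mem_singleton] at hu
        rcases hu with rfl | rfl | h'
        exacts [absurd huS hvS, absurd huS hxS, by simp at h']
      refine ⟨⟨x, hxv⟩, ⟨b, hb⟩, fun e => hxb (congrArg Subtype.val e),
        fun e => hxb_nadj (by simpa using e), hxS, hbS, ?_, ?_⟩
      · intro q
        obtain ⟨u, hu, huS⟩ :=
          hsep (Walk.cons hx (q.map (SimpleGraph.Embedding.induce _).toHom))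
        change u ∈ a :: (q.map (SimpleGraph.Embedding.induce _).toHom).support at hu
        rcases List.mem_cons.1 hu with rfl | hu
        · exact absurd huS hvS
        · obtain ⟨w, hw, rfl⟩ := mem_map_support hu
          exact ⟨w, hw, huS⟩
      · intro T' hT' hsepT'
        have hTS := image_ssubset hvS hT'
        have h1 : ¬ Separates G (Subtype.val '' T') a b := hmin _ hTS
        rw [Separates] at h1; push_neg at h1
        obtain ⟨p, hp⟩ := h1
        cases p with
        | nil => exact hne rfl
        | @cons _ c _ h p' =>
          have hc : c ≠ a := h.ne'
          obtain ⟨q', hq'⟩ := shortcut hsimp p'.length p' le_rfl hc hb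
          have havoid : ∀ u ∈ q'.support, u ∉ T' := by
            intro u hu huT
            refine hp _ ?_ ⟨u, huT, rfl⟩
            rw [SimpleGraph.Walk.support_cons]
            exact List.mem_cons_of_mem _ (hq' u hu)
          by_cases hxc : x = c
          · obtain ⟨w, hw, hwT⟩ := hsepT' (q'.copy (Subtype.ext hxc.symm) rfl)
            rw [SimpleGraph.Walk.support_copy] at hw
            exact havoid w hw hwT
          · have hadjxc : G.Adj x c := hsimp x hx c h hxc
            obtain ⟨w, hw, hwT⟩ := hsepT' (Walk.cons (by simpa using hadjxc) q')
            rw [SimpleGraph.Walk.support_cons] at hw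
            rcases List.mem_cons.1 hw with rfl | hw
            · exact hxS (hT'.1 hwT)
            · exact havoid w hw hwT
  · left
    refine ⟨hvS, ⟨a, hav⟩, ⟨b, hb⟩, fun e => hne (congrArg Subtype.val e),
      fun e => hadj (by simpa using e), haS, hbS, sep_restrict hsep hvS hav hb, ?_⟩
    intro T' hT' hsepT'
    have hTS := image_ssubset hvS hT'
    have h1 : ¬ Separates G (Subtype.val '' T') a b := hmin _ hTS
    rw [Separates] at h1; push_neg at h1
    obtain ⟨p, hp⟩ := h1
    obtain ⟨q, hq⟩ := shortcut hsimp p.length p le_rfl hav hb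
    obtain ⟨w, hw, hwT⟩ := hsepT' q
    exact hp _ (hq w hw) ⟨w, hwT, rfl⟩

end Aux4


theorem stmt8 (G : SimpleGraph V) [Fintype V] (v : V)
    (hsimp : ∀ a ∈ G.neighborSet v, ∀ b ∈ G.neighborSet v, a ≠ b → G.Adj a b) :
    numMinSeps (G.induce {u : V | u ≠ v}) ≤ numMinSeps G ∧
    numMinSeps G ≤ numMinSeps (G.induce {u : V | u ≠ v}) + 1 ∧
    ∀ S : Set V, IsMinSep G S →
      (v ∉ S ∧ IsMinSep (G.induce {u : V | u ≠ v}) {u : {u : V // u ≠ v} | (u : V) ∈ S})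
        ∨ S = G.neighborSet v := by
  have hinj : Function.Injective
      (Set.image (Subtype.val : ({u : V | u ≠ v} : Set V) → V)) :=
    Set.image_injective.2 Subtype.val_injective
  refine ⟨?_, ?_, fun S hS => dichotomy hsimp hS⟩
  · have hmap : (Set.image Subtype.val) '' {S' | IsMinSep (G.induce {u : V | u ≠ v}) S'} ⊆
        {S | IsMinSep G S} := by
      rintro _ ⟨S', hS', rfl⟩
      obtain ⟨a', b', hp⟩ := hS'
      exact ⟨a', b', lift_pair hsimp hp⟩
    calc numMinSeps (G.induce {u : V | u ≠ v})
        = ((Set.image Subtype.val) ''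
            {S' | IsMinSep (G.induce {u : V | u ≠ v}) S'}).ncard :=
          (Set.ncard_image_of_injective _ hinj).symm
      _ ≤ numMinSeps G := Set.ncard_le_ncard hmap (Set.toFinite _)
  · have hsub : {S | IsMinSep G S} ⊆
        ((Set.image Subtype.val) '' {S' | IsMinSep (G.induce {u : V | u ≠ v}) S'}) ∪
          {G.neighborSet v} := by
      intro S hS
      rcases dichotomy hsimp hS with ⟨hvS, hS'⟩ | h
      · left
        refine ⟨{u | (u : V) ∈ S}, hS', ?_⟩
        ext x
        constructor
        · rintro ⟨u, hu, rfl⟩; exact hu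
        · intro hx; exact ⟨⟨x, fun e => hvS (e ▸ hx)⟩, hx, rfl⟩
      · right; simp [h]
    calc numMinSeps G ≤ _ := Set.ncard_le_ncard hsub (Set.toFinite _)
      _ ≤ ((Set.image Subtype.val) ''
            {S' | IsMinSep (G.induce {u : V | u ≠ v}) S'}).ncard +
          ({G.neighborSet v} : Set (Set V)).ncard := Set.ncard_union_le _ _
      _ = numMinSeps (G.induce {u : V | u ≠ v}) + 1 := by
          rw [Set.ncard_image_of_injective _ hinj, Set.ncard_singleton]; rfl
end

section
/- Let G be a 2P_2-free graph (G has no induced subgraph isomorphic to the disjoint union of two edges) and let S be a minimal separator of G. Then there exists a vertex v ∈ V(G) such that S = N_G(v). -/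
open SimpleGraph

variable {V : Type*}

/-- `G` has no induced subgraph isomorphic to `2P₂` (two disjoint edges). -/
def TwoP2Free (G : SimpleGraph V) : Prop :=
  ¬ ∃ a b c d : V, a ≠ b ∧ a ≠ c ∧ a ≠ d ∧ b ≠ c ∧ b ≠ d ∧ c ≠ d ∧
    G.Adj a b ∧ G.Adj c d ∧ ¬ G.Adj a c ∧ ¬ G.Adj a d ∧ ¬ G.Adj b c ∧ ¬ G.Adj b d

/-- There is a walk from `a` to `w` avoiding `S`. -/
def AvoidsW (G : SimpleGraph V) (S : Set V) (a w : V) : Prop :=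
  ∃ p : G.Walk a w, ∀ v ∈ p.support, v ∉ S

lemma avoidsW_refl (G : SimpleGraph V) (S : Set V) {a : V} (ha : a ∉ S) :
    AvoidsW G S a a := ⟨.nil, by simp [ha]⟩

lemma avoidsW_cons (G : SimpleGraph V) (S : Set V) {a c w : V}
    (h : G.Adj a c) (ha : a ∉ S) (h2 : AvoidsW G S c w) : AvoidsW G S a w := by
  obtain ⟨p, hp⟩ := h2
  exact ⟨.cons h p, by simpa [ha] using hp⟩

lemma avoidsW_notMem (G : SimpleGraph V) (S : Set V) {a w : V}
    (h : AvoidsW G S a w) : w ∉ S := by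
  obtain ⟨p, hp⟩ := h
  exact hp w p.end_mem_support

lemma firstHit (G : SimpleGraph V) (S : Set V) : ∀ {a b : V} (p : G.Walk a b),
    a ∉ S → (∃ v ∈ p.support, v ∈ S) →
    ∃ w v, AvoidsW G S a w ∧ G.Adj w v ∧ v ∈ S ∧ v ∈ p.support := by
  intro a b p
  induction p with
  | nil => intro ha hp; simp at hp; exact absurd hp ha
  | @cons a c b h q ih =>
    intro ha hp
    by_cases hc : c ∈ S
    · exact ⟨a, c, avoidsW_refl G S ha, h, hc, by simp⟩
    · have hq : ∃ v ∈ q.support, v ∈ S := by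
        obtain ⟨v, hv, hvS⟩ := hp
        simp only [SimpleGraph.Walk.support_cons, List.mem_cons] at hv
        rcases hv with rfl | hv
        · exact absurd hvS ha
        · exact ⟨v, hv, hvS⟩
      obtain ⟨w, v, haw, hadj, hvS, hvp⟩ := ih hc hq
      exact ⟨w, v, avoidsW_cons G S h ha haw, hadj, hvS,
        by simp [SimpleGraph.Walk.support_cons, hvp]⟩

lemma fullSide (G : SimpleGraph V) (S : Set V) {a b : V}
    (ha : a ∉ S) (hsep : Separates G S a b)
    (hmin : ∀ T : Set V, T ⊂ S → ¬ Separates G T a b)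
    {s : V} (hs : s ∈ S) : ∃ w, AvoidsW G S a w ∧ G.Adj s w := by
  by_contra hcon
  push_neg at hcon
  apply hmin (S \ {s}) ⟨Set.diff_subset, fun hsub => (hsub hs).2 rfl⟩
  intro p
  obtain ⟨v, hv, hvS⟩ := hsep p
  obtain ⟨w, v', haw, hadj, hv'S, hv'p⟩ := firstHit G S p ha ⟨v, hv, hvS⟩
  refine ⟨v', hv'p, hv'S, ?_⟩
  rintro rfl
  exact hcon w haw hadj.symm

/-- Two avoid-reachable vertices from separated endpoints are not adjacent and distinct. -/
lemma cross_not_adj (G : SimpleGraph V) (S : Set V) {a b x y : V}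
    (hsep : Separates G S a b) (hx : AvoidsW G S a x) (hy : AvoidsW G S b y) :
    ¬ G.Adj x y := by
  intro hadj
  obtain ⟨p, hp⟩ := hx
  obtain ⟨q, hq⟩ := hy
  obtain ⟨v, hv, hvS⟩ := hsep ((p.append (Walk.cons hadj Walk.nil)).append q.reverse)
  rw [Walk.mem_support_append_iff] at hv
  rcases hv with hv | hv
  · rw [Walk.mem_support_append_iff] at hv
    rcases hv with hv | hv
    · exact hp v hv hvS
    · simp only [Walk.support_cons, Walk.support_nil, List.mem_cons,
        List.not_mem_nil, or_false] at hv
      rcases hv with rfl | rfl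
      · exact hp v p.end_mem_support hvS
      · exact hq v q.end_mem_support hvS
  · rw [Walk.support_reverse, List.mem_reverse] at hv
    exact hq v hv hvS

lemma cross_ne (G : SimpleGraph V) (S : Set V) {a b x y : V}
    (hsep : Separates G S a b) (hx : AvoidsW G S a x) (hy : AvoidsW G S b y) :
    x ≠ y := by
  rintro rfl
  obtain ⟨p, hp⟩ := hx
  obtain ⟨q, hq⟩ := hy
  obtain ⟨v, hv, hvS⟩ := hsep (p.append q.reverse)
  rw [Walk.mem_support_append_iff] at hv
  rcases hv with hv | hv
  · exact hp v hv hvS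
  · rw [Walk.support_reverse, List.mem_reverse] at hv
    exact hq v hv hvS

/-- If the "component" of `a` is edgeless, then `S = N(a)`. -/
lemma edgeless_case (G : SimpleGraph V) (S : Set V) {a b : V}
    (ha : a ∉ S) (hsep : Separates G S a b)
    (hmin : ∀ T : Set V, T ⊂ S → ¬ Separates G T a b)
    (hE : ¬ ∃ x y, AvoidsW G S a x ∧ y ∉ S ∧ G.Adj x y) :
    S = G.neighborSet a := by
  push_neg at hE
  have hsingle : ∀ w, AvoidsW G S a w → w = a := by
    intro w hw
    obtain ⟨p, hp⟩ := hw
    cases p with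
    | nil => rfl
    | @cons a c w h q =>
      exact absurd h (hE a c (avoidsW_refl G S ha)
        (hp c (by simp [Walk.support_cons])))
  ext s
  constructor
  · intro hs
    obtain ⟨w, haw, hadj⟩ := fullSide G S ha hsep hmin hs
    rw [hsingle w haw] at hadj
    exact hadj.symm
  · intro hs
    by_contra hsS
    exact hE a s (avoidsW_refl G S ha) hsS hs

lemma avoidsW_adj (G : SimpleGraph V) (S : Set V) {a x y : V}
    (hx : AvoidsW G S a x) (h : G.Adj x y) (hy : y ∉ S) : AvoidsW G S a y := by
  obtain ⟨p, hp⟩ := hx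
  refine ⟨p.append (Walk.cons h Walk.nil), ?_⟩
  intro v hv
  rw [Walk.mem_support_append_iff] at hv
  rcases hv with hv | hv
  · exact hp v hv
  · simp only [Walk.support_cons, Walk.support_nil, List.mem_cons,
      List.not_mem_nil, or_false] at hv
    rcases hv with rfl | rfl
    · exact hp v p.end_mem_support
    · exact hy


theorem stmt9 (G : SimpleGraph V) (hfree : TwoP2Free G)
    (S : Set V) (hS : IsMinSep G S) :
    ∃ v : V, S = G.neighborSet v := by
  obtain ⟨a, b, hab, hnadj, haS, hbS, hsep, hmin⟩ := hS
  have hsep' : Separates G S b a := fun p => by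
    obtain ⟨v, hv, hvS⟩ := hsep p.reverse
    exact ⟨v, by simpa [Walk.support_reverse] using hv, hvS⟩
  have hmin' : ∀ T : Set V, T ⊂ S → ¬ Separates G T b a := by
    intro T hT hsepT
    apply hmin T hT
    intro p
    obtain ⟨v, hv, hvT⟩ := hsepT p.reverse
    exact ⟨v, by simpa [Walk.support_reverse] using hv, hvT⟩
  by_cases hA : ∃ x y, AvoidsW G S a x ∧ y ∉ S ∧ G.Adj x y
  · by_cases hB : ∃ x y, AvoidsW G S b x ∧ y ∉ S ∧ G.Adj x y
    · exfalso
      obtain ⟨x1, x2, hx1, hx2S, hxadj⟩ := hA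
      obtain ⟨y1, y2, hy1, hy2S, hyadj⟩ := hB
      have hx2 : AvoidsW G S a x2 := avoidsW_adj G S hx1 hxadj hx2S
      have hy2 : AvoidsW G S b y2 := avoidsW_adj G S hy1 hyadj hy2S
      exact hfree ⟨x1, x2, y1, y2, hxadj.ne,
        cross_ne G S hsep hx1 hy1, cross_ne G S hsep hx1 hy2,
        cross_ne G S hsep hx2 hy1, cross_ne G S hsep hx2 hy2, hyadj.ne,
        hxadj, hyadj,
        cross_not_adj G S hsep hx1 hy1, cross_not_adj G S hsep hx1 hy2,
        cross_not_adj G S hsep hx2 hy1, cross_not_adj G S hsep hx2 hy2⟩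
    · exact ⟨b, edgeless_case G S hbS hsep' hmin' hB⟩
  · exact ⟨a, edgeless_case G S haS hsep hmin hA⟩
end

section
/- Every 2P_2-free graph G has at most |V(G)| minimal separators. -/
open SimpleGraph

variable {V : Type*}

/-- The inclusion homomorphism from an induced subgraph. -/
private def inclHom (G : SimpleGraph V) (s : Set V) : G.induce s →g G :=
  ⟨Subtype.val, fun h => h⟩

/-- From a walk `a → s` all of whose vertices except `s` avoid `S`, extract a
neighbor `t` of `s` outside `S` that is reachable from `a` in `G - S`. -/
private lemma walk_to_nbr (G : SimpleGraph V) (S : Set V) : ∀ {a s : V}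
    (w : G.Walk a s), (∀ v ∈ w.support, v ≠ s → v ∈ (Sᶜ : Set V)) → ∀ (hne : a ≠ s)
    (ha : a ∈ (Sᶜ : Set V)),
    ∃ t : (Sᶜ : Set V), G.Adj s ↑t ∧
      (G.induce (Sᶜ : Set V)).Reachable ⟨a, ha⟩ t := by
  intro a s w
  induction w with
  | nil => intro _ hne _; exact absurd rfl hne
  | @cons a c s h w' ih =>
    intro hsup hne ha
    by_cases hcs : c = s
    · subst hcs
      exact ⟨⟨a, ha⟩, h.symm, Reachable.refl _⟩
    · have hc : c ∈ (Sᶜ : Set V) := hsup c (by simp) hcs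
      obtain ⟨t, hadj, hreach⟩ := ih (fun v hv hvs => hsup v (by simp [hv]) hvs) hcs hc
      refine ⟨t, hadj, Reachable.trans ?_ hreach⟩
      exact Adj.reachable (by exact h : (G.induce (Sᶜ : Set V)).Adj ⟨a, ha⟩ ⟨c, hc⟩)

/-- One-sided fullness: if `S` separates `a,b` but some walk `p` meets `S` only
possibly in `s`, then `s` has a neighbor in the component of `a` in `G - S`. -/
private lemma side_nbr (G : SimpleGraph V) {S : Set V} {a b s : V} (hsS : s ∈ S)
    (ha : a ∉ S) (hsep : Separates G S a b)
    (p : G.Walk a b) (hp : ∀ v ∈ p.support, v ∉ S \ {s}) :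
    ∃ t : (Sᶜ : Set V), G.Adj s ↑t ∧
      (G.induce (Sᶜ : Set V)).Reachable ⟨a, ha⟩ t := by
  classical
  obtain ⟨v, hv, hvS⟩ := hsep p
  have hvs : v = s := by
    by_contra hne
    exact hp v hv ⟨hvS, hne⟩
  subst hvs
  have hane : a ≠ v := fun h => ha (h ▸ hvS)
  refine walk_to_nbr G S (p.takeUntil v hv) ?_ hane ha
  intro u hu hus
  have hup : u ∈ p.support := p.support_takeUntil_subset hv hu
  intro huS
  exact hp u hup ⟨huS, hus⟩

/-- If the component of `a` in `G - S` is incident to no edge, then `S = N(a)`. -/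
private lemma eq_nbhd (G : SimpleGraph V) {S : Set V} {a b : V}
    (h : IsMinSepPair G S a b)
    (hedgeless : ∀ u v : (Sᶜ : Set V),
      (G.induce (Sᶜ : Set V)).Reachable ⟨a, h.2.2.1⟩ u →
        ¬ (G.induce (Sᶜ : Set V)).Adj u v) :
    S = G.neighborSet a := by
  obtain ⟨hab, hnadj, ha, hb, hsep, hmin⟩ := h
  apply Set.eq_of_subset_of_subset
  · intro s hsS
    have hssub : S \ {s} ⊂ S := by
      refine ⟨Set.diff_subset, fun hsub => ?_⟩
      have := hsub hsS
      simp at this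
    have hnsep := hmin (S \ {s}) hssub
    rw [Separates] at hnsep
    push_neg at hnsep
    obtain ⟨p, hp⟩ := hnsep
    obtain ⟨t, hadj, hreach⟩ := side_nbr G hsS ha hsep p hp
    have hta : t = ⟨a, ha⟩ := by
      obtain ⟨w⟩ := hreach
      cases w with
      | nil => rfl
      | cons hadj' w' => exact absurd hadj' (hedgeless _ _ (Reachable.refl _))
    rw [hta] at hadj
    exact hadj.symm
  · intro w hw
    by_contra hwS
    exact hedgeless ⟨a, ha⟩ ⟨w, hwS⟩ (Reachable.refl _) hw

/-- `IsMinSepPair` is symmetric in `a` and `b`. -/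
private lemma minSepPair_symm (G : SimpleGraph V) {S : Set V} {a b : V}
    (h : IsMinSepPair G S a b) : IsMinSepPair G S b a := by
  obtain ⟨hab, hnadj, ha, hb, hsep, hmin⟩ := h
  refine ⟨hab.symm, fun h' => hnadj h'.symm, hb, ha, fun p => ?_, fun T hT hsepT => ?_⟩
  · obtain ⟨v, hv, hvS⟩ := hsep p.reverse
    exact ⟨v, by simpa using hv, hvS⟩
  · refine hmin T hT fun p => ?_
    obtain ⟨v, hv, hvS⟩ := hsepT p.reverse
    exact ⟨v, by simpa using hv, hvS⟩

/-- Key lemma: in a `2P₂`-free graph, every minimal separator is a neighborhood. -/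
private lemma minsep_eq_nbhd (G : SimpleGraph V) (hfree : TwoP2Free G)
    {S : Set V} (h : IsMinSep G S) : ∃ v, S = G.neighborSet v := by
  obtain ⟨a, b, h⟩ := h
  obtain ⟨hab, hnadj, ha, hb, hsep, hmin⟩ := h
  -- a and b are not reachable in G - S
  have hnreach : ¬ (G.induce (Sᶜ : Set V)).Reachable ⟨a, ha⟩ ⟨b, hb⟩ := by
    rintro ⟨w⟩
    obtain ⟨v, hv, hvS⟩ := hsep (w.map (inclHom G (Sᶜ : Set V)))
    replace hv : v ∈ (w.map (inclHom G (Sᶜ : Set V))).support := hv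
    rw [Walk.support_map] at hv
    obtain ⟨u, hu, rfl⟩ := List.mem_map.mp hv
    exact u.2 hvS
  -- case on whether the component of a has an edge
  by_cases hedgeA : ∀ u v : (Sᶜ : Set V),
      (G.induce (Sᶜ : Set V)).Reachable ⟨a, ha⟩ u → ¬ (G.induce (Sᶜ : Set V)).Adj u v
  · exact ⟨a, eq_nbhd G ⟨hab, hnadj, ha, hb, hsep, hmin⟩ hedgeA⟩
  by_cases hedgeB : ∀ u v : (Sᶜ : Set V),
      (G.induce (Sᶜ : Set V)).Reachable ⟨b, hb⟩ u → ¬ (G.induce (Sᶜ : Set V)).Adj u v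
  · exact ⟨b, eq_nbhd G (minSepPair_symm G ⟨hab, hnadj, ha, hb, hsep, hmin⟩) hedgeB⟩
  -- both components have an edge: build a 2P₂
  exfalso
  push_neg at hedgeA hedgeB
  obtain ⟨u, v, hru, huv⟩ := hedgeA
  obtain ⟨x, y, hrx, hxy⟩ := hedgeB
  have hrv : (G.induce (Sᶜ : Set V)).Reachable ⟨a, ha⟩ v := hru.trans huv.reachable
  have hry : (G.induce (Sᶜ : Set V)).Reachable ⟨b, hb⟩ y := hrx.trans hxy.reachable
  -- no vertex reachable from a is adjacent or equal to one reachable from b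
  have cross : ∀ (p q : (Sᶜ : Set V)),
      (G.induce (Sᶜ : Set V)).Reachable ⟨a, ha⟩ p →
      (G.induce (Sᶜ : Set V)).Reachable ⟨b, hb⟩ q → (↑p : V) ≠ ↑q ∧ ¬ G.Adj ↑p ↑q := by
    intro p q hp hq
    constructor
    · intro hpq
      have : p = q := Subtype.ext hpq
      exact hnreach (hp.trans (this ▸ hq.symm))
    · intro hadj
      have : (G.induce (Sᶜ : Set V)).Adj p q := hadj
      exact hnreach (hp.trans (this.reachable.trans hq.symm))
  obtain ⟨hux, huxa⟩ := cross u x hru hrx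
  obtain ⟨huy, huya⟩ := cross u y hru hry
  obtain ⟨hvx, hvxa⟩ := cross v x hrv hrx
  obtain ⟨hvy, hvya⟩ := cross v y hrv hry
  exact hfree ⟨u, v, x, y, fun h => huv.ne (Subtype.ext h), hux, huy, hvx, hvy,
    fun h => hxy.ne (Subtype.ext h), huv, hxy, huxa, huya, hvxa, hvya⟩

theorem stmt10 (G : SimpleGraph V) [Fintype V] (hfree : TwoP2Free G) :
    numMinSeps G ≤ Fintype.card V := by
  classical
  have hsub : {S : Set V | IsMinSep G S} ⊆ Set.range G.neighborSet := by
    intro S hS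
    obtain ⟨v, hv⟩ := minsep_eq_nbhd G hfree hS
    exact ⟨v, hv.symm⟩
  calc numMinSeps G ≤ (Set.range G.neighborSet).ncard :=
        Set.ncard_le_ncard hsub (Set.finite_range _)
    _ = ((G.neighborSet) '' Set.univ).ncard := by rw [Set.image_univ]
    _ ≤ (Set.univ : Set V).ncard := Set.ncard_image_le Set.finite_univ
    _ = Fintype.card V := by rw [Set.ncard_univ, Nat.card_eq_fintype_card]
end

section
/- For every integer ℓ ≥ 3 and every k ≥ 2, the theta graph θ_{k,ℓ} (the union of k internally disjoint paths of length ℓ with common endpoints a and b) has at least (ℓ−1)^k minimal separators. Specifically, every set consisting of exactly one internal vertex from each of the k paths is a minimal separator. -/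
open SimpleGraph

variable {V : Type*}

/-- The theta graph `θ_{k,ℓ}` (for `ℓ ≥ 3`): two vertices `Sum.inl false`
and `Sum.inl true` joined by `k` internally disjoint paths of length `ℓ`,
the `j`-th path having internal vertices `(j, 0), (j, 1), …, (j, ℓ-2)`. -/
def thetaGraph (k ℓ : ℕ) : SimpleGraph (Bool ⊕ Fin k × Fin (ℓ - 1)) :=
  SimpleGraph.fromRel (fun x y =>
    (∃ (j : Fin k) (i : Fin (ℓ - 1)), x = Sum.inl false ∧ y = Sum.inr (j, i) ∧ (i : ℕ) = 0) ∨
    (∃ (j : Fin k) (i : Fin (ℓ - 1)), x = Sum.inl true ∧ y = Sum.inr (j, i) ∧ (i : ℕ) = ℓ - 2) ∨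
    (∃ (j : Fin k) (i i' : Fin (ℓ - 1)), x = Sum.inr (j, i) ∧ y = Sum.inr (j, i') ∧
      (i' : ℕ) = (i : ℕ) + 1))

namespace ThetaAux
variable {k ℓ : ℕ}

def Sset (f : Fin k → Fin (ℓ - 1)) : Set (Bool ⊕ Fin k × Fin (ℓ - 1)) :=
  {x | ∃ j, x = Sum.inr (j, f j)}

def R (f : Fin k → Fin (ℓ - 1)) : Set (Bool ⊕ Fin k × Fin (ℓ - 1)) :=
  {x | x = Sum.inl false ∨ ∃ j i, x = Sum.inr (j, i) ∧ (i : ℕ) < f j}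

lemma cross (hl : 3 ≤ ℓ) (f : Fin k → Fin (ℓ - 1)) {u v : Bool ⊕ Fin k × Fin (ℓ - 1)}
    (h : (thetaGraph k ℓ).Adj u v) (hu : u ∈ R f) (hv : v ∉ R f) : v ∈ Sset f := by
  rw [thetaGraph, fromRel_adj] at h
  obtain ⟨hne, h | h⟩ := h
  · rcases h with ⟨j, i, rfl, rfl, hi⟩ | ⟨j, i, rfl, rfl, hi⟩ | ⟨j, i, i', rfl, rfl, hi⟩ <;>
      simp only [R, Set.mem_setOf_eq, Sset, Sum.inr.injEq, Sum.inl.injEq, Prod.mk.injEq,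
        not_or, not_exists, not_and, reduceCtorEq, false_or, or_false] at hu hv ⊢
    · have h1 := hv j i
      refine ⟨j, rfl, Fin.ext ?_⟩
      have := (f j).isLt
      omega
    · simp at hu
    · obtain ⟨j', i'', hji, hlt⟩ := hu
      obtain ⟨rfl, rfl⟩ := hji
      have h1 := hv j i'
      refine ⟨j, rfl, Fin.ext ?_⟩
      omega
  · rcases h with ⟨j, i, hv1, rfl, hi⟩ | ⟨j, i, hv1, rfl, hi⟩ | ⟨j, i, i', hv1, rfl, hi⟩ <;>
      subst hv1 <;>
      simp only [R, Set.mem_setOf_eq, Sset, Sum.inr.injEq, Sum.inl.injEq, Prod.mk.injEq,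
        not_or, not_exists, not_and, reduceCtorEq, false_or, or_false] at hu hv ⊢
    · exact (hv.1 trivial).elim
    · obtain ⟨j', i'', hji, hlt⟩ := hu
      obtain ⟨rfl, rfl⟩ := hji
      have := (f j).isLt
      omega
    · obtain ⟨j', i'', hji, hlt⟩ := hu
      obtain ⟨rfl, rfl⟩ := hji
      have h1 := hv j i
      refine ⟨j, rfl, Fin.ext ?_⟩
      omega

end ThetaAux

namespace ThetaAux

lemma sep (hl : 3 ≤ ℓ) (f : Fin k → Fin (ℓ - 1))
    (p : (thetaGraph k ℓ).Walk (Sum.inl false) (Sum.inl true)) :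
    ∃ v ∈ p.support, v ∈ Sset f := by
  suffices H : ∀ (u b) (p : (thetaGraph k ℓ).Walk u b), u ∈ R f → b ∉ R f →
      ∃ v ∈ p.support, v ∈ Sset f from
    H _ _ p (Or.inl rfl) (by rintro (h | ⟨j, i, h, _⟩) <;> simp at h)
  intro u b p
  induction p with
  | nil =>
    intro hu hb
    exact absurd hu hb
  | @cons u w _ h q ih =>
    intro hu hb
    by_cases hw : w ∈ R f
    · obtain ⟨v, hv, hvS⟩ := ih hw hb
      exact ⟨v, by simp [hv], hvS⟩
    · exact ⟨w, by simp, cross hl f h hu hw⟩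

lemma pathWalk (hl : 3 ≤ ℓ) (j0 : Fin k) :
    ∀ (m : ℕ) (i : Fin (ℓ - 1)), (i : ℕ) + m = ℓ - 2 →
    ∃ p : (thetaGraph k ℓ).Walk (Sum.inr (j0, i)) (Sum.inl true),
      ∀ v ∈ p.support, v = Sum.inl true ∨ ∃ i', v = Sum.inr (j0, i') := by
  intro m
  induction m with
  | zero =>
    intro i hi
    refine ⟨Walk.cons ?_ Walk.nil, ?_⟩
    · rw [thetaGraph, fromRel_adj]
      exact ⟨by simp, Or.inr (Or.inr (Or.inl ⟨j0, i, rfl, rfl, by omega⟩))⟩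
    · intro v hv
      simp only [Walk.support_cons, Walk.support_nil, List.mem_cons, List.mem_singleton] at hv
      rcases hv with rfl | rfl | h
      · exact Or.inr ⟨i, rfl⟩
      · exact Or.inl rfl
      · simp at h
  | succ m ih =>
    intro i hi
    have hlt : (i : ℕ) + 1 < ℓ - 1 := by omega
    obtain ⟨p, hp⟩ := ih ⟨(i : ℕ) + 1, hlt⟩ (by simp; omega)
    refine ⟨Walk.cons ?_ p, ?_⟩
    · rw [thetaGraph, fromRel_adj]
      refine ⟨by simp [Fin.ext_iff], Or.inl (Or.inr (Or.inr ⟨j0, i, ⟨(i : ℕ) + 1, hlt⟩, rfl, rfl, rfl⟩))⟩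
    · intro v hv
      simp only [Walk.support_cons, List.mem_cons] at hv
      rcases hv with rfl | h
      · exact Or.inr ⟨i, rfl⟩
      · exact hp v h

end ThetaAux

theorem stmt11 (k ℓ : ℕ) (hk : 2 ≤ k) (hl : 3 ≤ ℓ) :
    (∀ f : Fin k → Fin (ℓ - 1),
      IsMinSep (thetaGraph k ℓ) {x : Bool ⊕ Fin k × Fin (ℓ - 1) | ∃ j, x = Sum.inr (j, f j)}) ∧
    (ℓ - 1) ^ k ≤ numMinSeps (thetaGraph k ℓ) := by
  classical
  have main : ∀ f : Fin k → Fin (ℓ - 1),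
      IsMinSep (thetaGraph k ℓ) {x : Bool ⊕ Fin k × Fin (ℓ - 1) | ∃ j, x = Sum.inr (j, f j)} := by
    intro f
    refine ⟨Sum.inl false, Sum.inl true, ?_, ?_, ?_, ?_, ?_, ?_⟩
    · simp
    · rw [thetaGraph, fromRel_adj]
      rintro ⟨-, h | h⟩ <;>
        rcases h with ⟨j, i, h1, h2, -⟩ | ⟨j, i, h1, h2, -⟩ | ⟨j, i, i', h1, h2, -⟩ <;>
        simp_all
    · rintro ⟨j, h⟩; simp at h
    · rintro ⟨j, h⟩; simp at h
    · intro p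
      exact ThetaAux.sep hl f p
    · intro T hT hsep
      obtain ⟨s, hsS, hsT⟩ := Set.exists_of_ssubset hT
      obtain ⟨j0, rfl⟩ := hsS
      have hz : (0 : ℕ) < ℓ - 1 := by omega
      obtain ⟨p, hp⟩ := ThetaAux.pathWalk hl j0 (ℓ - 2) ⟨0, hz⟩ (by simp)
      have hadj : (thetaGraph k ℓ).Adj (Sum.inl false) (Sum.inr (j0, ⟨0, hz⟩)) := by
        rw [thetaGraph, fromRel_adj]
        exact ⟨by simp, Or.inl (Or.inl ⟨j0, ⟨0, hz⟩, rfl, rfl, rfl⟩)⟩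
      obtain ⟨v, hv, hvT⟩ := hsep (SimpleGraph.Walk.cons hadj p)
      have hvS : v ∈ {x : Bool ⊕ Fin k × Fin (ℓ - 1) | ∃ j, x = Sum.inr (j, f j)} :=
        hT.1 hvT
      obtain ⟨j, rfl⟩ := hvS
      simp only [SimpleGraph.Walk.support_cons, List.mem_cons] at hv
      rcases hv with h | h
      · simp at h
      · rcases hp _ h with h1 | ⟨i', h1⟩
        · simp at h1
        · obtain ⟨rfl, h2⟩ := Prod.mk.injEq .. ▸ Sum.inr.inj h1
          exact hsT (h2 ▸ hvT)
  refine ⟨main, ?_⟩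
  have hinj : Function.Injective
      (fun f : Fin k → Fin (ℓ - 1) =>
        {x : Bool ⊕ Fin k × Fin (ℓ - 1) | ∃ j, x = Sum.inr (j, f j)}) := by
    intro f g h
    funext j
    have h1 : Sum.inr (j, f j) ∈ {x : Bool ⊕ Fin k × Fin (ℓ - 1) | ∃ j, x = Sum.inr (j, g j)} := by
      simp only at h
      rw [← h]; exact ⟨j, rfl⟩
    obtain ⟨j', hj'⟩ := h1
    obtain ⟨rfl, h2⟩ := Prod.mk.injEq .. ▸ Sum.inr.inj hj'
    exact h2
  have hsub : Set.range (fun f : Fin k → Fin (ℓ - 1) =>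
        {x : Bool ⊕ Fin k × Fin (ℓ - 1) | ∃ j, x = Sum.inr (j, f j)})
      ⊆ {S | IsMinSep (thetaGraph k ℓ) S} := by
    rintro S ⟨f, rfl⟩
    exact main f
  calc (ℓ - 1) ^ k = Nat.card (Fin k → Fin (ℓ - 1)) := by
        simp [Nat.card_eq_fintype_card]
    _ = (Set.range (fun f : Fin k → Fin (ℓ - 1) =>
          {x : Bool ⊕ Fin k × Fin (ℓ - 1) | ∃ j, x = Sum.inr (j, f j)})).ncard := by
        rw [← Nat.card_coe_set_eq, Nat.card_range_of_injective hinj]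
    _ ≤ numMinSeps (thetaGraph k ℓ) :=
        Set.ncard_le_ncard hsub (Set.toFinite _)
end

section
/- For integers k, ℓ ≥ 2, let L_{k,ℓ} be the line graph of the theta graph θ_{k,ℓ}. Then L_{k,ℓ} has at least ℓ^k − 2 minimal separators: every set containing exactly one vertex from each of the k paths of length ℓ between the two k-cliques, other than the two cliques themselves, is a minimal separator. -/
open SimpleGraph

variable {V : Type*}

/-- The line graph `L_{k,ℓ}` of the theta graph `θ_{k,ℓ}`: two `k`-cliques
`{(j,0) : j}` and `{(j,ℓ-1) : j}` joined by `k` disjoint paths, the `j`-th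
path being `(j,0), (j,1), …, (j,ℓ-1)`. -/
def lineTheta (k ℓ : ℕ) : SimpleGraph (Fin k × Fin ℓ) :=
  SimpleGraph.fromRel (fun x y =>
    (x.1 = y.1 ∧ (y.2 : ℕ) = (x.2 : ℕ) + 1) ∨
    ((x.2 : ℕ) = 0 ∧ (y.2 : ℕ) = 0) ∨
    ((x.2 : ℕ) = ℓ - 1 ∧ (y.2 : ℕ) = ℓ - 1))


namespace TP
variable {k ℓ : ℕ}

lemma adj_iff {x y : Fin k × Fin ℓ} :
    (lineTheta k ℓ).Adj x y ↔ x ≠ y ∧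
      ((x.1 = y.1 ∧ (y.2:ℕ) = (x.2:ℕ) + 1) ∨ (y.1 = x.1 ∧ (x.2:ℕ) = (y.2:ℕ) + 1) ∨
       ((x.2:ℕ) = 0 ∧ (y.2:ℕ) = 0) ∨ ((x.2:ℕ) = ℓ-1 ∧ (y.2:ℕ) = ℓ-1)) := by
  simp only [lineTheta, fromRel_adj]
  tauto

def Sf (f : Fin k → Fin ℓ) : Set (Fin k × Fin ℓ) := {x | x.2 = f x.1}

lemma cross (f : Fin k → Fin ℓ) {x y : Fin k × Fin ℓ} (hxy : (lineTheta k ℓ).Adj x y)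
    (hx : (x.2:ℕ) < (f x.1 : ℕ)) (hy : ¬ (y.2:ℕ) < (f y.1 : ℕ)) : y ∈ Sf f := by
  rw [adj_iff] at hxy
  have h1 : (f x.1 : ℕ) < ℓ := (f x.1).isLt
  have h2 : (f y.1 : ℕ) < ℓ := (f y.1).isLt
  rcases hxy with ⟨-, ⟨h, h'⟩ | ⟨h, h'⟩ | ⟨h, h'⟩ | ⟨h, h'⟩⟩
  · rw [h] at hx h1; show y.2 = f y.1; exact Fin.ext (by omega)
  · rw [h] at hy h2; omega
  · show y.2 = f y.1; exact Fin.ext (by omega)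
  · omega

lemma sep_aux (f : Fin k → Fin ℓ) : ∀ {a b : Fin k × Fin ℓ} (p : (lineTheta k ℓ).Walk a b),
    (a.2:ℕ) < (f a.1:ℕ) → ¬ (b.2:ℕ) < (f b.1:ℕ) → ∃ v ∈ p.support, v ∈ Sf f := by
  intro a b p
  induction p with
  | nil => intro h1 h2; exact absurd h1 h2
  | @cons u c w h q ih =>
    intro h1 h2
    by_cases hc : (c.2:ℕ) < (f c.1:ℕ)
    · obtain ⟨v, hv, hvS⟩ := ih hc h2
      exact ⟨v, by simp [hv], hvS⟩
    · exact ⟨c, by simp, cross f h h1 hc⟩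

def walkUp (i : Fin k) (t : ℕ) (ht : t < ℓ) (hl : 1 ≤ ℓ) :
    (lineTheta k ℓ).Walk (i, ⟨t, ht⟩) (i, ⟨ℓ-1, by omega⟩) := by
  by_cases h : t = ℓ - 1
  · exact Walk.nil.copy rfl (by simp [h])
  · have ht1 : t + 1 < ℓ := by omega
    refine Walk.cons (v := (i, ⟨t+1, ht1⟩)) ?_ (walkUp i (t+1) ht1 hl)
    rw [adj_iff]
    refine ⟨?_, Or.inl ⟨rfl, rfl⟩⟩
    simp only [ne_eq, Prod.mk.injEq, Fin.mk.injEq, not_and]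
    intro _
    omega
termination_by ℓ - t
decreasing_by omega

theorem walkUp_support (i : Fin k) (t : ℕ) (ht : t < ℓ) (hl : 1 ≤ ℓ) :
    ∀ v ∈ (walkUp i t ht hl).support, v.1 = i := by
  rw [walkUp]
  split
  · simp
  · intro v hv
    rw [Walk.support_cons, List.mem_cons] at hv
    rcases hv with rfl | hv
    · rfl
    · exact walkUp_support i (t+1) (by omega) hl v hv
termination_by ℓ - t
decreasing_by omega

lemma hopWalk (c : ℕ) (hc : c < ℓ) (hcc : c = 0 ∨ c = ℓ-1) (j i : Fin k) :
    ∃ w : (lineTheta k ℓ).Walk (j, ⟨c,hc⟩) (i, ⟨c,hc⟩),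
      ∀ v ∈ w.support, v = (j,(⟨c,hc⟩ : Fin ℓ)) ∨ v = (i,(⟨c,hc⟩:Fin ℓ)) := by
  by_cases h : j = i
  · subst h; exact ⟨Walk.nil, by simp⟩
  · have hadj : (lineTheta k ℓ).Adj (j, ⟨c,hc⟩) (i, ⟨c,hc⟩) := by
      rw [adj_iff]
      constructor
      · simp only [ne_eq, Prod.mk.injEq, not_and]
        intro hji
        exact absurd hji h
      · rcases hcc with rfl | rfl
        · exact Or.inr (Or.inr (Or.inl ⟨rfl, rfl⟩))
        · exact Or.inr (Or.inr (Or.inr ⟨rfl, rfl⟩))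
    refine ⟨Walk.cons hadj Walk.nil, ?_⟩
    intro v hv
    rw [Walk.support_cons, Walk.support_nil] at hv
    rcases List.mem_cons.mp hv with h' | h'
    · exact Or.inl h'
    · exact Or.inr (List.mem_singleton.mp h')

end TP

namespace TP

lemma part1 (hl : 2 ≤ ℓ) (f : Fin k → Fin ℓ)
    (h0 : Sf f ≠ {x : Fin k × Fin ℓ | (x.2:ℕ) = 0})
    (hL : Sf f ≠ {x : Fin k × Fin ℓ | (x.2:ℕ) = ℓ - 1}) :
    IsMinSep (lineTheta k ℓ) (Sf f) := by
  have hj : ∃ j, (f j : ℕ) ≠ 0 := by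
    by_contra hcon
    push_neg at hcon
    exact h0 (by ext x; simp [Sf, Fin.ext_iff, hcon x.1])
  have hj' : ∃ j', (f j' : ℕ) ≠ ℓ - 1 := by
    by_contra hcon
    push_neg at hcon
    exact hL (by ext x; simp [Sf, Fin.ext_iff, hcon x.1])
  obtain ⟨j, hj⟩ := hj
  obtain ⟨j', hj'⟩ := hj'
  set a : Fin k × Fin ℓ := (j, ⟨0, by omega⟩) with ha_def
  set b : Fin k × Fin ℓ := (j', ⟨ℓ-1, by omega⟩) with hb_def
  have haS : a ∉ Sf f := by
    intro ha
    simp only [Sf, Set.mem_setOf_eq, ha_def] at ha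
    exact hj ((congrArg Fin.val ha).symm)
  have hbS : b ∉ Sf f := by
    intro hb
    simp only [Sf, Set.mem_setOf_eq, hb_def] at hb
    exact hj' ((congrArg Fin.val hb).symm)
  have hjj : ℓ = 2 → j ≠ j' := by
    intro h2 he
    subst he
    have := (f j).isLt
    omega
  refine ⟨a, b, ?_, ?_, haS, hbS, ?_, ?_⟩
  · intro he
    have : (0:ℕ) = ℓ - 1 := congrArg (fun x => (x.2:ℕ)) he
    omega
  · intro hadj
    rw [adj_iff] at hadj
    obtain ⟨-, hcase⟩ := hadj
    rcases hcase with ⟨h1, h2⟩ | ⟨h1, h2⟩ | ⟨h1, h2⟩ | ⟨h1, h2⟩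
    · simp only [ha_def, hb_def] at h1 h2
      exact hjj (by omega) h1
    · simp only [ha_def, hb_def] at h1 h2
      omega
    · simp only [ha_def, hb_def] at h1 h2
      omega
    · simp only [ha_def, hb_def] at h1 h2
      omega
  · intro p
    refine sep_aux f p ?_ ?_
    · show (0:ℕ) < (f j : ℕ)
      omega
    · show ¬ ((ℓ-1:ℕ) < (f j' : ℕ))
      have := (f j').isLt
      omega
  · intro T hT hsep
    obtain ⟨s, hsS, hsT⟩ := Set.exists_of_ssubset hT
    have hsub : T ⊆ Sf f := hT.1
    have hs2 : s.2 = f s.1 := hsS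
    have key : ∀ v : Fin k × Fin ℓ, v.1 = s.1 → v ∉ T := by
      intro v hv1 hvT
      have hvS : v.2 = f v.1 := hsub hvT
      have : v = s := Prod.ext_iff.mpr ⟨hv1, by rw [hvS, hv1, ← hs2]⟩
      exact hsT (this ▸ hvT)
    obtain ⟨w1, hw1⟩ := hopWalk (k := k) (ℓ := ℓ) 0 (by omega) (Or.inl rfl) j s.1
    obtain ⟨w3, hw3⟩ := hopWalk (k := k) (ℓ := ℓ) (ℓ-1) (by omega) (Or.inr rfl) s.1 j'
    have h0l : (0:ℕ) < ℓ := by omega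
    let w2 := walkUp (ℓ := ℓ) s.1 0 h0l (by omega)
    obtain ⟨v, hv, hvT⟩ := hsep (w1.append (w2.append w3))
    rw [Walk.mem_support_append_iff] at hv
    rcases hv with hv | hv
    · rcases hw1 v hv with h' | h'
      · rw [h'] at hvT
        exact haS (hsub hvT)
      · exact key v (by rw [h']) hvT
    · rw [Walk.mem_support_append_iff] at hv
      rcases hv with hv | hv
      · exact key v (walkUp_support _ _ _ _ v hv) hvT
      · rcases hw3 v hv with h' | h'
        · exact key v (by rw [h']) hvT
        · rw [h'] at hvT
          exact hbS (hsub hvT)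

end TP

theorem stmt12 (k ℓ : ℕ) (hk : 2 ≤ k) (hl : 2 ≤ ℓ) :
    (∀ f : Fin k → Fin ℓ,
      {x : Fin k × Fin ℓ | x.2 = f x.1} ≠ {x : Fin k × Fin ℓ | (x.2 : ℕ) = 0} →
      {x : Fin k × Fin ℓ | x.2 = f x.1} ≠ {x : Fin k × Fin ℓ | (x.2 : ℕ) = ℓ - 1} →
      IsMinSep (lineTheta k ℓ) {x : Fin k × Fin ℓ | x.2 = f x.1}) ∧
    ℓ ^ k - 2 ≤ numMinSeps (lineTheta k ℓ) := by
  have hpart1 : ∀ f : Fin k → Fin ℓ,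
      TP.Sf f ≠ {x : Fin k × Fin ℓ | (x.2 : ℕ) = 0} →
      TP.Sf f ≠ {x : Fin k × Fin ℓ | (x.2 : ℕ) = ℓ - 1} →
      IsMinSep (lineTheta k ℓ) (TP.Sf f) := fun f => TP.part1 hl f
  refine ⟨hpart1, ?_⟩
  set c0 : Fin k → Fin ℓ := fun _ => ⟨0, by omega⟩ with hc0_def
  set cL : Fin k → Fin ℓ := fun _ => ⟨ℓ-1, by omega⟩ with hcL_def
  have hinj : Function.Injective (TP.Sf : (Fin k → Fin ℓ) → Set (Fin k × Fin ℓ)) := by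
    intro f g hfg
    funext i
    have h1 : (i, f i) ∈ TP.Sf f := rfl
    rw [hfg] at h1
    exact h1
  have hSc0 : TP.Sf c0 = {x : Fin k × Fin ℓ | (x.2:ℕ) = 0} := by
    ext x; simp [TP.Sf, c0, Fin.ext_iff]
  have hScL : TP.Sf cL = {x : Fin k × Fin ℓ | (x.2:ℕ) = ℓ - 1} := by
    ext x; simp [TP.Sf, cL, Fin.ext_iff]
  have hsubset : TP.Sf '' ({c0, cL}ᶜ : Set (Fin k → Fin ℓ)) ⊆
      {S : Set (Fin k × Fin ℓ) | IsMinSep (lineTheta k ℓ) S} := by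
    rintro _ ⟨f, hf, rfl⟩
    simp only [Set.mem_compl_iff, Set.mem_insert_iff, Set.mem_singleton_iff, not_or] at hf
    exact hpart1 f (fun he => hf.1 (hinj (he.trans hSc0.symm)))
      (fun he => hf.2 (hinj (he.trans hScL.symm)))
  have hc0L : c0 ≠ cL := by
    intro h
    have := congrArg Fin.val (congrFun h ⟨0, by omega⟩)
    simp [c0, cL] at this
    omega
  have h1 : (TP.Sf '' ({c0, cL}ᶜ : Set (Fin k → Fin ℓ))).ncard ≤ numMinSeps (lineTheta k ℓ) :=
    Set.ncard_le_ncard hsubset (Set.toFinite _)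
  rw [Set.ncard_image_of_injective _ hinj] at h1
  have h2 : ({c0, cL} : Set (Fin k → Fin ℓ)).ncard = 2 := Set.ncard_pair hc0L
  have h3 : ({c0, cL} : Set (Fin k → Fin ℓ)).ncard +
      (({c0, cL}ᶜ : Set (Fin k → Fin ℓ))).ncard = Nat.card (Fin k → Fin ℓ) :=
    Set.ncard_add_ncard_compl _
  have h4 : Nat.card (Fin k → Fin ℓ) = ℓ ^ k := by
    simp [Nat.card_eq_fintype_card]
  omega
end

section
/- The class of {3P_1, diamond}-free graphs is not tame; i.e., for every polynomial p there exists a {3P_1, diamond}-free graph G with more than p(|V(G)|) minimal separators. (Witnessed by the line graphs of theta graphs θ_{k,2}, which are {3P_1, diamond}-free and have at least 2^k − 2 minimal separators on 3k vertices.) -/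
open SimpleGraph

variable {V : Type*}

/-- `G` has no independent set of size 3 (no induced `3P₁`). -/
def ThreeP1Free {W : Type*} (G : SimpleGraph W) : Prop :=
  ¬ ∃ a b c : W, a ≠ b ∧ a ≠ c ∧ b ≠ c ∧ ¬ G.Adj a b ∧ ¬ G.Adj a c ∧ ¬ G.Adj b c

/-- `G` has no induced diamond (`K₄` minus an edge). -/
def DiamondFree {W : Type*} (G : SimpleGraph W) : Prop :=
  ¬ ∃ a b c d : W, a ≠ b ∧ a ≠ c ∧ a ≠ d ∧ b ≠ c ∧ b ≠ d ∧ c ≠ d ∧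
    G.Adj a b ∧ G.Adj a c ∧ G.Adj a d ∧ G.Adj b c ∧ G.Adj b d ∧ ¬ G.Adj c d

namespace Sep13

abbrev VV (m : ℕ) := Fin (2*(m+2))

/-- side of a vertex: `true` = "e"-side. -/
def sid {m : ℕ} (v : VV m) : Bool := decide ((v : ℕ) < m+2)

/-- index of a vertex. -/
def idx {m : ℕ} (v : VV m) : Fin (m+2) := ⟨(v : ℕ) % (m+2), Nat.mod_lt _ (by omega)⟩

def mk (m : ℕ) (s : Bool) (i : Fin (m+2)) : VV m :=
  if s then ⟨(i : ℕ), by omega⟩ else ⟨(i : ℕ) + (m+2), by omega⟩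

lemma mod_eq {m : ℕ} (a : ℕ) (h : a < 2*(m+2)) :
    a % (m+2) = if a < m+2 then a else a - (m+2) := by
  split
  · exact Nat.mod_eq_of_lt ‹_›
  · rw [Nat.mod_eq_sub_mod (by omega)]
    exact Nat.mod_eq_of_lt (by omega)

lemma sid_mk {m : ℕ} (s : Bool) (i : Fin (m+2)) : sid (mk m s i) = s := by
  have := i.isLt
  cases s <;> simp [sid, mk] <;> omega

lemma idx_mk {m : ℕ} (s : Bool) (i : Fin (m+2)) : idx (mk m s i) = i := by
  have hi := i.isLt
  cases s
  · apply Fin.ext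
    show ((i : ℕ) + (m+2)) % (m+2) = (i : ℕ)
    rw [mod_eq _ (by omega)]
    split <;> omega
  · apply Fin.ext
    show (i : ℕ) % (m+2) = (i : ℕ)
    exact Nat.mod_eq_of_lt hi

lemma mk_sid_idx {m : ℕ} (v : VV m) : mk m (sid v) (idx v) = v := by
  have hv := v.isLt
  by_cases h : (v : ℕ) < m+2
  · have hs : sid v = true := by simp [sid, h]
    rw [hs]
    apply Fin.ext
    show (v : ℕ) % (m+2) = (v : ℕ)
    exact Nat.mod_eq_of_lt h
  · have hs : sid v = false := by simp [sid, h]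
    rw [hs]
    apply Fin.ext
    show (v : ℕ) % (m+2) + (m+2) = (v : ℕ)
    rw [mod_eq _ hv]
    split <;> omega

/-- the graph: two cliques (sides) plus a perfect matching between them. -/
def gph (m : ℕ) : SimpleGraph (VV m) where
  Adj u v := u ≠ v ∧ (sid u = sid v ∨ idx u = idx v)
  symm := by
    constructor
    intro u v ⟨h1, h2⟩
    exact ⟨h1.symm, by tauto⟩
  loopless := ⟨fun v h => h.1 rfl⟩

lemma adj_iff {m : ℕ} (u v : VV m) :
    (gph m).Adj u v ↔ u ≠ v ∧ (sid u = sid v ∨ idx u = idx v) := Iff.rfl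

lemma eq_of_sid_idx {m : ℕ} {u v : VV m} (h1 : sid u = sid v) (h2 : idx u = idx v) :
    u = v := by
  rw [← mk_sid_idx u, ← mk_sid_idx v, h1, h2]

lemma threeP1 (m : ℕ) : ThreeP1Free (gph m) := by
  rintro ⟨a, b, c, hab, hac, hbc, nab, nac, nbc⟩
  have h1 : sid a ≠ sid b := fun h => nab ⟨hab, Or.inl h⟩
  have h2 : sid a ≠ sid c := fun h => nac ⟨hac, Or.inl h⟩
  have h3 : sid b ≠ sid c := fun h => nbc ⟨hbc, Or.inl h⟩
  cases hA : sid a <;> cases hB : sid b <;> cases hC : sid c <;> simp_all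

lemma adj_both {m : ℕ} {x c d : VV m} (hxc : (gph m).Adj x c) (hxd : (gph m).Adj x d)
    (hs : sid c ≠ sid d) (hi : idx c ≠ idx d) :
    (sid x = sid c ∧ idx x = idx d) ∨ (sid x = sid d ∧ idx x = idx c) := by
  obtain ⟨hxc1, hxc2⟩ := hxc
  obtain ⟨hxd1, hxd2⟩ := hxd
  by_cases h : sid x = sid c
  · left
    refine ⟨h, ?_⟩
    rcases hxd2 with h' | h'
    · exact absurd (h.symm.trans h') hs
    · exact h'
  · have h' : sid x = sid d := by
      cases hX : sid x <;> cases hC : sid c <;> cases hD : sid d <;> simp_all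
    right
    refine ⟨h', ?_⟩
    rcases hxc2 with h'' | h''
    · exact absurd (h''.symm.trans h') (by tauto)
    · exact h''

lemma diamond (m : ℕ) : DiamondFree (gph m) := by
  rintro ⟨a, b, c, d, hab, hac, had, hbc, hbd, hcd, Hab, Hac, Had, Hbc, Hbd, ncd⟩
  have hs : sid c ≠ sid d ∧ idx c ≠ idx d := by
    constructor
    · intro h; exact ncd ⟨hcd, Or.inl h⟩
    · intro h; exact ncd ⟨hcd, Or.inr h⟩
  have ha := adj_both Hac Had hs.1 hs.2
  have hb := adj_both Hbc Hbd hs.1 hs.2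
  obtain ⟨_, h2⟩ := Hab
  rcases ha with ⟨ha1, ha2⟩ | ⟨ha1, ha2⟩ <;> rcases hb with ⟨hb1, hb2⟩ | ⟨hb1, hb2⟩
  · exact hab (eq_of_sid_idx (ha1.trans hb1.symm) (ha2.trans hb2.symm))
  · rcases h2 with h | h
    · exact hs.1 (ha1.symm.trans (h.trans hb1))
    · exact hs.2 (hb2.symm.trans (h.symm.trans ha2))
  · rcases h2 with h | h
    · exact hs.1 (hb1.symm.trans (h.symm.trans ha1))
    · exact hs.2 (ha2.symm.trans (h.trans hb2))
  · exact hab (eq_of_sid_idx (ha1.trans hb1.symm) (ha2.trans hb2.symm))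

def a0 (m : ℕ) : VV m := mk m true 0
def b1 (m : ℕ) : VV m := mk m false 1

def Sc {m : ℕ} (c : Fin (m+2) → Bool) : Set (VV m) := {v | sid v = c (idx v)}

lemma mem_Sc {m : ℕ} {c : Fin (m+2) → Bool} {v : VV m} : v ∈ Sc c ↔ sid v = c (idx v) :=
  Iff.rfl

lemma mk_mem_Sc {m : ℕ} {c : Fin (m+2) → Bool} {s : Bool} {i : Fin (m+2)} :
    mk m s i ∈ Sc c ↔ s = c i := by
  rw [mem_Sc, sid_mk, idx_mk]

lemma a0_ne_b1 (m : ℕ) : a0 m ≠ b1 m := by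
  intro h
  have h1 : sid (a0 m) = true := sid_mk _ _
  have h2 : sid (b1 m) = false := sid_mk _ _
  rw [h, h2] at h1
  simp at h1

lemma zero_ne_one' (m : ℕ) : (0 : Fin (m+2)) ≠ 1 := by
  intro h
  have := congrArg Fin.val h
  simp at this

lemma not_adj_a0_b1 (m : ℕ) : ¬ (gph m).Adj (a0 m) (b1 m) := by
  rintro ⟨-, h | h⟩
  · rw [show a0 m = mk m true 0 from rfl, show b1 m = mk m false 1 from rfl,
      sid_mk, sid_mk] at h
    simp at h
  · rw [show a0 m = mk m true 0 from rfl, show b1 m = mk m false 1 from rfl,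
      idx_mk, idx_mk] at h
    exact zero_ne_one' m h

lemma adj_mk_of_sid {m : ℕ} {s : Bool} {i j : Fin (m+2)} (h : i ≠ j) :
    (gph m).Adj (mk m s i) (mk m s j) :=
  ⟨fun he => h (by rw [← idx_mk s i, ← idx_mk s j, he]), Or.inl (by rw [sid_mk, sid_mk])⟩

lemma adj_mk_of_idx {m : ℕ} {s t : Bool} {i : Fin (m+2)} (h : s ≠ t) :
    (gph m).Adj (mk m s i) (mk m t i) :=
  ⟨fun he => h (by rw [← sid_mk s i, ← sid_mk t i, he]), Or.inr (by rw [idx_mk, idx_mk])⟩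

lemma sepwalk {m : ℕ} (c : Fin (m+2) → Bool) :
    ∀ {u w : VV m} (p : (gph m).Walk u w), sid u = true → sid w = false → u ∉ Sc c →
      ∃ v ∈ p.support, v ∈ Sc c := by
  intro u w p
  induction p with
  | nil =>
    intro hs hw _
    rw [hw] at hs
    simp at hs
  | @cons u w _ h q ih =>
    intro hs hend hns
    by_cases hw : w ∈ Sc c
    · exact ⟨w, by simp, hw⟩
    · have hsw : sid w = true := by
        by_contra hsw
        have hsw' : sid w = false := by cases hW : sid w <;> simp_all
        rcases h.2 with h' | h'
        · rw [hs, hsw'] at h'; simp at h'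
        · apply hw
          rw [mem_Sc, hsw', ← h']
          rw [mem_Sc, hs] at hns
          cases hC : c (idx u) <;> simp_all
      obtain ⟨v, hv1, hv2⟩ := ih hsw hend hw
      exact ⟨v, by simp [hv1], hv2⟩

lemma minsep {m : ℕ} (c : Fin (m+2) → Bool) (hc0 : c 0 = false) (hc1 : c 1 = true) :
    IsMinSepPair (gph m) (Sc c) (a0 m) (b1 m) := by
  have ha0 : a0 m ∉ Sc c := by rw [a0, mk_mem_Sc, hc0]; simp
  have hb1 : b1 m ∉ Sc c := by rw [b1, mk_mem_Sc, hc1]; simp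
  refine ⟨a0_ne_b1 m, not_adj_a0_b1 m, ha0, hb1, ?_, ?_⟩
  · intro p
    exact sepwalk c p (sid_mk _ _) (sid_mk _ _) ha0
  · intro T hT hsep
    have hTS : T ⊆ Sc c := hT.1
    obtain ⟨v, hvS, hvT⟩ := (Set.ssubset_iff_of_subset hTS).mp hT
    rw [mem_Sc] at hvS
    obtain ⟨i, hidef⟩ : ∃ i, idx v = i := ⟨idx v, rfl⟩
    have hv : v = mk m (c i) i := by
      rw [← hidef, ← hvS, mk_sid_idx]
    -- the "partner" vertex is not in Sc c
    have hpartner : ∀ s : Bool, s ≠ c i → mk m s i ∉ T := by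
      intro s hsne hmem
      have := hTS hmem
      rw [mk_mem_Sc] at this
      exact hsne this
    have hvT' : ∀ s : Bool, mk m s i ∉ T := by
      intro s
      by_cases hsc : s = c i
      · rw [hsc, ← hv]; exact hvT
      · exact hpartner s hsc
    have haT : a0 m ∉ T := fun h => ha0 (hTS h)
    have hbT : b1 m ∉ T := fun h => hb1 (hTS h)
    by_cases hi0 : i = 0
    · -- walk a0 - mk false 0 - b1
      obtain ⟨x, hx1, hx2⟩ := hsep
        (Walk.cons (adj_mk_of_idx (by simp) : (gph m).Adj (mk m true 0) (mk m false 0))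
          (Walk.cons (adj_mk_of_sid (zero_ne_one' m)) Walk.nil))
      change x ∈ [_, _, _] at hx1
      simp only [Walk.support_cons, Walk.support_nil, List.mem_cons,
        List.not_mem_nil, or_false] at hx1
      rcases hx1 with rfl | rfl | rfl
      · exact haT hx2
      · rw [hi0] at hvT'
        exact hvT' false hx2
      · exact hbT hx2
    · by_cases hi1 : i = 1
      · -- walk a0 - mk true 1 - b1
        obtain ⟨x, hx1, hx2⟩ := hsep
          (Walk.cons (adj_mk_of_sid (zero_ne_one' m))
            (Walk.cons (adj_mk_of_idx (by simp) : (gph m).Adj (mk m true 1) (mk m false 1))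
              Walk.nil))
        change x ∈ [_, _, _] at hx1
        simp only [Walk.support_cons, Walk.support_nil, List.mem_cons,
          List.not_mem_nil, or_false] at hx1
        rcases hx1 with rfl | rfl | rfl
        · exact haT hx2
        · rw [hi1] at hvT'
          exact hvT' true hx2
        · exact hbT hx2
      · -- walk a0 - mk true i - mk false i - b1
        obtain ⟨x, hx1, hx2⟩ := hsep
          (Walk.cons (adj_mk_of_sid (Ne.symm hi0))
            (Walk.cons (adj_mk_of_idx (by simp) : (gph m).Adj (mk m true i) (mk m false i))
              (Walk.cons (adj_mk_of_sid hi1) Walk.nil)))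
        change x ∈ [_, _, _, _] at hx1
        simp only [Walk.support_cons, Walk.support_nil, List.mem_cons,
          List.not_mem_nil, or_false] at hx1
        rcases hx1 with rfl | rfl | rfl | rfl
        · exact haT hx2
        · exact hvT' true hx2
        · exact hvT' false hx2
        · exact hbT hx2

lemma Sc_inj {m : ℕ} : Function.Injective (Sc (m := m)) := by
  intro c c' h
  funext i
  have h1 : mk m (c i) i ∈ Sc c := mk_mem_Sc.mpr rfl
  rw [h] at h1
  exact mk_mem_Sc.mp h1

def cfun {m : ℕ} (d : Fin m → Bool) : Fin (m+2) → Bool :=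
  fun i => if h : 2 ≤ (i : ℕ) then d ⟨(i : ℕ) - 2, by omega⟩ else decide ((i : ℕ) = 1)

lemma cfun0 {m : ℕ} (d : Fin m → Bool) : cfun d 0 = false := by
  simp [cfun]

lemma cfun1 {m : ℕ} (d : Fin m → Bool) : cfun d 1 = true := by
  simp [cfun]

lemma cfun_inj {m : ℕ} : Function.Injective (cfun (m := m)) := by
  intro d d' h
  funext j
  have hj := congrFun h (⟨(j : ℕ) + 2, by omega⟩ : Fin (m+2))
  simp only [cfun] at hj
  rw [dif_pos (by exact Nat.le_add_left 2 _), dif_pos (by exact Nat.le_add_left 2 _)] at hj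
  simpa using hj

lemma card_lb (m : ℕ) : 2^m ≤ numMinSeps (gph m) := by
  have hsub : Set.range (fun d : Fin m → Bool => Sc (cfun d)) ⊆ {S | IsMinSep (gph m) S} := by
    rintro S ⟨d, rfl⟩
    exact ⟨a0 m, b1 m, minsep (cfun d) (cfun0 d) (cfun1 d)⟩
  have hinj : Function.Injective (fun d : Fin m → Bool => Sc (cfun d)) :=
    fun d d' h => cfun_inj (Sc_inj h)
  have h1 : (Set.range (fun d : Fin m → Bool => Sc (cfun d))).ncard = 2^m := by
    rw [← Set.image_univ, Set.ncard_image_of_injective _ hinj, Set.ncard_univ]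
    simp [Nat.card_eq_fintype_card]
  calc 2^m = _ := h1.symm
    _ ≤ _ := Set.ncard_le_ncard hsub (Set.toFinite _)

open Filter Asymptotics in
lemma poly_lt (p : Polynomial ℝ) : ∃ m : ℕ, p.eval ((2*(m+2) : ℕ) : ℝ) < 2^m := by
  have h1 : (fun x : ℝ => p.eval x) =O[atTop] fun x => x ^ p.natDegree := by
    have := Polynomial.isBigO_of_degree_le p (Polynomial.X ^ p.natDegree)
      (by simpa [Polynomial.degree_X_pow] using Polynomial.degree_le_natDegree)
    simpa using this
  have htend : Tendsto (fun m : ℕ => ((2*(m+2) : ℕ) : ℝ)) atTop atTop := by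
    apply tendsto_natCast_atTop_atTop.comp
    exact Filter.tendsto_atTop_atTop.mpr fun b => ⟨b, fun a ha => by omega⟩
  have hA : (fun m : ℕ => p.eval ((2*(m+2) : ℕ) : ℝ))
      =O[atTop] (fun m : ℕ => (((2*(m+2) : ℕ)) : ℝ) ^ p.natDegree) := h1.comp_tendsto htend
  have hsq : (1 : ℝ) < Real.sqrt 2 := by
    rw [show (1:ℝ) = Real.sqrt 1 from (Real.sqrt_one).symm]
    exact Real.sqrt_lt_sqrt (by norm_num) (by norm_num)
  have hB : (fun n : ℕ => (n : ℝ) ^ p.natDegree) =o[atTop] (fun n : ℕ => Real.sqrt 2 ^ n) :=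
    isLittleO_pow_const_const_pow_of_one_lt p.natDegree hsq
  have hnat : Tendsto (fun m : ℕ => 2*(m+2)) atTop atTop :=
    Filter.tendsto_atTop_atTop.mpr fun b => ⟨b, fun a ha => by omega⟩
  have hB' : (fun m : ℕ => (((2*(m+2) : ℕ)) : ℝ) ^ p.natDegree)
      =o[atTop] (fun m : ℕ => Real.sqrt 2 ^ (2*(m+2))) := hB.comp_tendsto hnat
  have hD : (fun m : ℕ => Real.sqrt 2 ^ (2*(m+2))) = (fun m : ℕ => 4 * (2:ℝ)^m) := by
    funext m
    rw [pow_mul, Real.sq_sqrt (by norm_num : (0:ℝ) ≤ 2), pow_add]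
    ring
  have hE : (fun m : ℕ => Real.sqrt 2 ^ (2*(m+2))) =O[atTop] (fun m : ℕ => (2:ℝ)^m) := by
    rw [hD]
    exact isBigO_const_mul_self 4 _ _
  have hFinal : (fun m : ℕ => p.eval ((2*(m+2) : ℕ) : ℝ)) =o[atTop] (fun m : ℕ => (2:ℝ)^m) :=
    hA.trans_isLittleO (hB'.trans_isBigO hE)
  rw [isLittleO_iff] at hFinal
  have := hFinal (show (0:ℝ) < 1/2 by norm_num)
  obtain ⟨m, hm⟩ := this.exists
  refine ⟨m, ?_⟩
  have h2 : (0:ℝ) < 2^m := by positivity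
  have h3 : ‖(2:ℝ)^m‖ = 2^m := by
    rw [Real.norm_eq_abs, abs_of_pos h2]
  rw [h3] at hm
  calc p.eval ((2*(m+2) : ℕ) : ℝ) ≤ ‖p.eval ((2*(m+2) : ℕ) : ℝ)‖ := le_abs_self _
    _ ≤ 1/2 * 2^m := hm
    _ < 2^m := by linarith

end Sep13

theorem stmt13 (p : Polynomial ℝ) :
    ∃ (n : ℕ) (G : SimpleGraph (Fin n)), ThreeP1Free G ∧ DiamondFree G ∧
      p.eval (n : ℝ) < (numMinSeps G : ℝ) := by
  obtain ⟨m, hm⟩ := Sep13.poly_lt p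
  refine ⟨2*(m+2), Sep13.gph m, Sep13.threeP1 m, Sep13.diamond m, ?_⟩
  have h1 : ((2^m : ℕ) : ℝ) ≤ (numMinSeps (Sep13.gph m) : ℝ) :=
    Nat.cast_le.mpr (Sep13.card_lb m)
  push_cast at h1
  exact lt_of_lt_of_le hm h1
end

section
/- For every integer h ≥ 2, the elementary wall of height h has at least 2^h minimal separators. -/
open SimpleGraph

variable {V : Type*}

/-- The `(2h+2) × (h+1)` grid with the appropriate vertical edges deleted:
a vertical edge from `(c, r)` to `(c, r+1)` is kept iff `c` and `r` have the
same parity (the deleted ones are those between `(2i+1, 2j)` and `(2i+1, 2j+1)`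
and between `(2i, 2j-1)` and `(2i, 2j)`). -/
def wallPre (h : ℕ) : SimpleGraph (Fin (2 * h + 2) × Fin (h + 1)) :=
  SimpleGraph.fromRel (fun x y =>
    (x.2 = y.2 ∧ (y.1 : ℕ) = (x.1 : ℕ) + 1) ∨
    (x.1 = y.1 ∧ (y.2 : ℕ) = (x.2 : ℕ) + 1 ∧ (x.1 : ℕ) % 2 = (x.2 : ℕ) % 2))

/-- The elementary wall of height `h`: the edge-deleted grid with its (two)
degree-one vertices removed. -/
def wall (h : ℕ) : SimpleGraph
    {v : Fin (2 * h + 2) × Fin (h + 1) //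
      v ∈ {v | ∃ w₁ w₂, w₁ ≠ w₂ ∧ (wallPre h).Adj v w₁ ∧ (wallPre h).Adj v w₂}} :=
  (wallPre h).induce {v | ∃ w₁ w₂, w₁ ≠ w₂ ∧ (wallPre h).Adj v w₁ ∧ (wallPre h).Adj v w₂}


abbrev WVert (h : ℕ) := {v : Fin (2 * h + 2) × Fin (h + 1) //
      v ∈ {v | ∃ w₁ w₂, w₁ ≠ w₂ ∧ (wallPre h).Adj v w₁ ∧ (wallPre h).Adj v w₂}}

lemma wall_adj_iff {h : ℕ} (u v : WVert h) :
    (wall h).Adj u v ↔ (wallPre h).Adj u.1 v.1 := Iff.rfl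

lemma wp_adj_h (h c r : ℕ) (h1 : c + 1 < 2*h+2) (h2 : r < h+1) :
    (wallPre h).Adj (⟨c, by omega⟩, ⟨r, h2⟩) (⟨c+1, h1⟩, ⟨r, h2⟩) := by
  rw [wallPre, fromRel_adj]
  refine ⟨?_, Or.inl (Or.inl ⟨rfl, rfl⟩)⟩
  intro he
  have := congrArg (fun p => (p.1 : ℕ)) he
  simp at this

lemma wp_adj_v (h c r : ℕ) (h1 : c < 2*h+2) (h2 : r + 1 < h+1) (hp : c % 2 = r % 2) :
    (wallPre h).Adj (⟨c, h1⟩, ⟨r, by omega⟩) (⟨c, h1⟩, ⟨r+1, h2⟩) := by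
  rw [wallPre, fromRel_adj]
  refine ⟨?_, Or.inl (Or.inr ⟨rfl, rfl, hp⟩)⟩
  intro he
  have := congrArg (fun p => (p.2 : ℕ)) he
  simp at this

/-- adjacency elimination at the nat level -/
lemma wp_adj_elim {h : ℕ} {x y : Fin (2*h+2) × Fin (h+1)} (ha : (wallPre h).Adj x y) :
    ((x.2 : ℕ) = (y.2 : ℕ) ∧ ((y.1 : ℕ) = (x.1 : ℕ) + 1 ∨ (x.1 : ℕ) = (y.1 : ℕ) + 1)) ∨
    ((x.1 : ℕ) = (y.1 : ℕ) ∧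
      (((y.2 : ℕ) = (x.2 : ℕ) + 1 ∧ (x.1 : ℕ) % 2 = (x.2 : ℕ) % 2) ∨
       ((x.2 : ℕ) = (y.2 : ℕ) + 1 ∧ (x.1 : ℕ) % 2 = (y.2 : ℕ) % 2))) := by
  rw [wallPre, fromRel_adj] at ha
  obtain ⟨-, h⟩ := ha
  rcases h with (⟨h1, h2⟩ | ⟨h1, h2, h3⟩) | (⟨h1, h2⟩ | ⟨h1, h2, h3⟩)
  · exact Or.inl ⟨by rw [h1], Or.inl h2⟩
  · exact Or.inr ⟨by rw [h1], Or.inl ⟨h2, h3⟩⟩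
  · exact Or.inl ⟨by rw [h1], Or.inr h2⟩
  · have e : (y.1 : ℕ) = (x.1 : ℕ) := congrArg Fin.val h1
    exact Or.inr ⟨e.symm, Or.inr ⟨h2, by omega⟩⟩

/-- sufficient condition for `(c, r)` to be a vertex of the wall -/
def wok (h c r : ℕ) : Prop :=
  (1 ≤ c ∧ c ≤ 2*h ∧ r ≤ h) ∨
  (c = 0 ∧ r ≤ h ∧ (r % 2 = 1 ∨ r < h)) ∨
  (c = 2*h+1 ∧ 1 ≤ r ∧ r ≤ h ∧ (r % 2 = 0 ∨ r < h))

lemma wok_c_lt {h c r : ℕ} (hw : wok h c r) : c < 2*h+2 := by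
  rcases hw with ⟨_,h2,_⟩ | ⟨h1,_⟩ | ⟨h1,_⟩ <;> omega

lemma wok_r_lt {h c r : ℕ} (hw : wok h c r) : r < h+1 := by
  rcases hw with ⟨_,_,h3⟩ | ⟨_,h2,_⟩ | ⟨_,_,h3,_⟩ <;> omega

lemma wok_mem {h c r : ℕ} (hw : wok h c r) :
    ((⟨c, wok_c_lt hw⟩, ⟨r, wok_r_lt hw⟩) : Fin (2*h+2) × Fin (h+1)) ∈
      {v | ∃ w₁ w₂, w₁ ≠ w₂ ∧ (wallPre h).Adj v w₁ ∧ (wallPre h).Adj v w₂} := by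
  rcases hw with ⟨h1, h2, h3⟩ | ⟨h1, h2, h3⟩ | ⟨h1, h2, h3, h4⟩
  · -- interior: horizontal neighbours on both sides
    obtain ⟨c', rfl⟩ : ∃ c', c = c' + 1 := ⟨c - 1, by omega⟩
    refine ⟨(⟨c', by omega⟩, ⟨r, by omega⟩), (⟨c'+2, by omega⟩, ⟨r, by omega⟩), ?_, ?_, ?_⟩
    · intro he; have := congrArg (fun p => (p.1 : ℕ)) he; simp at this
    · exact ((wp_adj_h h c' r (by omega) (by omega)).symm)
    · exact (by exact_mod_cast wp_adj_h h (c'+1) r (by omega) (by omega))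
  · -- left boundary
    subst h1
    rcases Nat.even_or_odd r with he | ho
    · -- r even, so r < h : neighbours (1, r) and (0, r+1)
      have hm : r % 2 = 0 := Nat.even_iff.mp he
      have hlt : r < h := h3.resolve_left (by omega)
      refine ⟨(⟨1, by omega⟩, ⟨r, by omega⟩), (⟨0, by omega⟩, ⟨r+1, by omega⟩), ?_, ?_, ?_⟩
      · intro heq; have := congrArg (fun p => (p.1 : ℕ)) heq; simp at this
      · exact (by exact_mod_cast wp_adj_h h 0 r (by omega) (by omega))
      · refine wp_adj_v h 0 r (by omega) (by omega) (by omega)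
    · -- r odd : neighbours (1, r) and (0, r-1)
      have hm : r % 2 = 1 := Nat.odd_iff.mp ho
      obtain ⟨r', rfl⟩ : ∃ r', r = r' + 1 := ⟨r - 1, by omega⟩
      refine ⟨(⟨1, by omega⟩, ⟨r'+1, by omega⟩), (⟨0, by omega⟩, ⟨r', by omega⟩), ?_, ?_, ?_⟩
      · intro heq; have := congrArg (fun p => (p.1 : ℕ)) heq; simp at this
      · exact (by exact_mod_cast wp_adj_h h 0 (r'+1) (by omega) (by omega))
      · refine (wp_adj_v h 0 r' (by omega) (by omega) ?_).symm
        omega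
  · -- right boundary c = 2h+1
    subst h1
    rcases Nat.even_or_odd r with he | ho
    · -- r even (and r ≥ 1) : neighbours (2h, r) and (2h+1, r-1)
      have hm : r % 2 = 0 := Nat.even_iff.mp he
      obtain ⟨r', rfl⟩ : ∃ r', r = r' + 1 := ⟨r - 1, by omega⟩
      refine ⟨(⟨2*h, by omega⟩, ⟨r'+1, by omega⟩), (⟨2*h+1, by omega⟩, ⟨r', by omega⟩), ?_, ?_, ?_⟩
      · intro heq; have := congrArg (fun p => (p.1 : ℕ)) heq; simp at this
      · exact (wp_adj_h h (2*h) (r'+1) (by omega) (by omega)).symm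
      · refine (wp_adj_v h (2*h+1) r' (by omega) (by omega) ?_).symm
        omega
    · -- r odd, so r < h : neighbours (2h, r) and (2h+1, r+1)
      have hm : r % 2 = 1 := Nat.odd_iff.mp ho
      have hlt : r < h := h4.resolve_left (by omega)
      refine ⟨(⟨2*h, by omega⟩, ⟨r, by omega⟩), (⟨2*h+1, by omega⟩, ⟨r+1, by omega⟩), ?_, ?_, ?_⟩
      · intro heq; have := congrArg (fun p => (p.1 : ℕ)) heq; simp at this
      · exact (wp_adj_h h (2*h) r (by omega) (by omega)).symm
      · refine wp_adj_v h (2*h+1) r (by omega) (by omega) (by omega)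
open SimpleGraph

section WCon
variable {V : Type*} {G : SimpleGraph V} {Q : V → Prop} {u v w : V}

/-- connectivity through vertices satisfying `Q` -/
def WCon (G : SimpleGraph V) (Q : V → Prop) (u v : V) : Prop :=
  ∃ p : G.Walk u v, ∀ x ∈ p.support, Q x

lemma WCon.refl (hu : Q u) : WCon G Q u u := ⟨Walk.nil, by simp [hu]⟩

lemma WCon.trans (h1 : WCon G Q u v) (h2 : WCon G Q v w) : WCon G Q u w := by
  obtain ⟨p, hp⟩ := h1; obtain ⟨q, hq⟩ := h2
  refine ⟨p.append q, fun x hx => ?_⟩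
  rw [Walk.mem_support_append_iff] at hx
  exact hx.elim (hp x) (hq x)

lemma WCon.symm (h : WCon G Q u v) : WCon G Q v u := by
  obtain ⟨p, hp⟩ := h
  exact ⟨p.reverse, fun x hx => hp x (by simpa using hx)⟩

lemma WCon.adj (h : G.Adj u v) (hu : Q u) (hv : Q v) : WCon G Q u v :=
  ⟨Walk.cons h Walk.nil, by simp [hu, hv]⟩

lemma WCon.cons (h : G.Adj u v) (hu : Q u) (h2 : WCon G Q v w) : WCon G Q u w := by
  obtain ⟨p, hp⟩ := h2
  exact ⟨Walk.cons h p, fun x hx => by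
    rw [Walk.support_cons] at hx
    rcases List.mem_cons.1 hx with rfl | hx
    · exact hu
    · exact hp x hx⟩

lemma WCon.mono {Q' : V → Prop} (hQ : ∀ x, Q x → Q' x) (h : WCon G Q u v) : WCon G Q' u v := by
  obtain ⟨p, hp⟩ := h; exact ⟨p, fun x hx => hQ x (hp x hx)⟩

end WCon

def wv (h c r : ℕ) (hw : wok h c r) : WVert h :=
  ⟨(⟨c, wok_c_lt hw⟩, ⟨r, wok_r_lt hw⟩), wok_mem hw⟩

@[simp] lemma wv_c (h c r : ℕ) (hw : wok h c r) : ((wv h c r hw).1.1 : ℕ) = c := rfl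
@[simp] lemma wv_r (h c r : ℕ) (hw : wok h c r) : ((wv h c r hw).1.2 : ℕ) = r := rfl

lemma wv_eq_iff {h c r c' r' : ℕ} (hw : wok h c r) (hw' : wok h c' r') :
    wv h c r hw = wv h c' r' hw' ↔ c = c' ∧ r = r' := by
  constructor
  · intro he
    exact ⟨congrArg (fun v => ((v : WVert h).1.1 : ℕ)) he,
           congrArg (fun v => ((v : WVert h).1.2 : ℕ)) he⟩
  · rintro ⟨rfl, rfl⟩; rfl

lemma wadj_h (h c r : ℕ) (hw1 : wok h c r) (hw2 : wok h (c+1) r) :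
    (wall h).Adj (wv h c r hw1) (wv h (c+1) r hw2) := by
  rw [wall_adj_iff]
  exact wp_adj_h h c r (wok_c_lt hw2) (wok_r_lt hw1)

lemma wadj_v (h c r : ℕ) (hp : c % 2 = r % 2) (hw1 : wok h c r) (hw2 : wok h c (r+1)) :
    (wall h).Adj (wv h c r hw1) (wv h c (r+1) hw2) := by
  rw [wall_adj_iff]
  exact wp_adj_v h c r (wok_c_lt hw1) (wok_r_lt hw2) hp

/-- walk along a row to the right -/
lemma con_row (h : ℕ) (Q : WVert h → Prop) (r : ℕ) (k : ℕ) :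
    ∀ (c₁ : ℕ) (hw : ∀ j, c₁ ≤ j → j ≤ c₁ + k → wok h j r),
    (∀ j (hj1 : c₁ ≤ j) (hj2 : j ≤ c₁ + k), Q (wv h j r (hw j hj1 hj2))) →
    WCon (wall h) Q (wv h c₁ r (hw c₁ le_rfl (Nat.le_add_right _ _)))
      (wv h (c₁+k) r (hw (c₁+k) (Nat.le_add_right _ _) le_rfl)) := by
  induction k with
  | zero => exact fun c₁ hw hQ => WCon.refl (hQ c₁ le_rfl le_rfl)
  | succ k ih =>
    intro c₁ hw hQ
    have step := ih c₁ (fun j h1 h2 => hw j h1 (by omega)) (fun j h1 h2 => hQ j h1 (by omega))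
    refine step.trans (WCon.adj (wadj_h h (c₁+k) r (hw _ (by omega) (by omega)) (hw _ (by omega) (by omega)))
      (hQ (c₁+k) (by omega) (by omega)) ?_)
    exact hQ (c₁+k+1) (by omega) le_rfl

/-- walk along a row between any two columns -/
lemma con_row' (h : ℕ) (Q : WVert h → Prop) (r c₁ c₂ : ℕ)
    (hw : ∀ j, min c₁ c₂ ≤ j → j ≤ max c₁ c₂ → wok h j r)
    (hQ : ∀ j (hj1 : min c₁ c₂ ≤ j) (hj2 : j ≤ max c₁ c₂), Q (wv h j r (hw j hj1 hj2)))
    (hw1 : wok h c₁ r) (hw2 : wok h c₂ r) :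
    WCon (wall h) Q (wv h c₁ r hw1) (wv h c₂ r hw2) := by
  rcases le_total c₁ c₂ with hle | hle
  · obtain ⟨k, rfl⟩ : ∃ k, c₂ = c₁ + k := ⟨c₂ - c₁, by omega⟩
    have := con_row h Q r k c₁
      (fun j h1 h2 => hw j (by omega) (by omega)) (fun j h1 h2 => hQ j (by omega) (by omega))
    exact this
  · obtain ⟨k, rfl⟩ : ∃ k, c₁ = c₂ + k := ⟨c₁ - c₂, by omega⟩
    have := con_row h Q r k c₂
      (fun j h1 h2 => hw j (by omega) (by omega)) (fun j h1 h2 => hQ j (by omega) (by omega))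
    exact this.symm

section Sep
variable {V : Type*} {G : SimpleGraph V} {S T : Set V} {a b : V}

lemma walk_invariant (P : V → Prop)
    (hPres : ∀ u v, G.Adj u v → u ∉ S → v ∉ S → (P u ↔ P v)) :
    ∀ {u v : V} (p : G.Walk u v), (∀ x ∈ p.support, x ∉ S) → (P u ↔ P v) := by
  intro u v p
  induction p with
  | nil => exact fun _ => Iff.rfl
  | cons hadj q ih =>
    intro hsup
    refine (hPres _ _ hadj (hsup _ (by simp)) (hsup _ (by simp [Walk.start_mem_support]))).trans
      (ih fun x hx => hsup x (by simp [hx]))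

lemma separates_of_invariant (P : V → Prop)
    (hPres : ∀ u v, G.Adj u v → u ∉ S → v ∉ S → (P u ↔ P v))
    (ha : P a) (hb : ¬ P b) : Separates G S a b := by
  intro p
  by_contra hc
  push_neg at hc
  exact hb ((walk_invariant P hPres p hc).mp ha)

lemma not_separates_of_wcon (h : WCon G (fun x => x ∉ T) a b) : ¬ Separates G T a b := by
  obtain ⟨p, hp⟩ := h
  intro hsep
  obtain ⟨v, hv1, hv2⟩ := hsep p
  exact hp v hv1 hv2

end Sep

/-- the horizontal cut determined by `t` : at each odd column `2i+1` the cut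
contains the vertex in row `t i` (which will be 1 or 2). -/
def Scut (h : ℕ) (t : ℕ → ℕ) : Set (WVert h) :=
  {v | (v.1.1 : ℕ) % 2 = 1 ∧ (v.1.2 : ℕ) = t ((v.1.1 : ℕ) / 2)}

lemma mem_scut_iff {h : ℕ} {t : ℕ → ℕ} {c r : ℕ} (hw : wok h c r) :
    wv h c r hw ∈ Scut h t ↔ c % 2 = 1 ∧ r = t (c / 2) := by
  simp only [Scut, Set.mem_setOf_eq, wv_c, wv_r]

lemma eq_wv {h : ℕ} (v : WVert h) {c r : ℕ} (hc : (v.1.1 : ℕ) = c) (hr : (v.1.2 : ℕ) = r)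
    (hw : wok h c r) : v = wv h c r hw := by
  apply Subtype.ext
  apply Prod.ext <;> apply Fin.ext <;> assumption

lemma wcon_through (h : ℕ) (hh : 2 ≤ h) (t : ℕ → ℕ) (ht : ∀ i, t i = 1 ∨ t i = 2)
    (h2 : h = 2 → t 1 = 1) (i : ℕ) (hi : i ≤ h)
    (hwa : wok h 0 1) (hwb : wok h 2 2) (hws : wok h (2*i+1) (t i)) :
    WCon (wall h) (fun x => x ∈ Scut h t → x = wv h (2*i+1) (t i) hws)
      (wv h 0 1 hwa) (wv h 2 2 hwb) := by
  set Q : WVert h → Prop := fun x => x ∈ Scut h t → x = wv h (2*i+1) (t i) hws with hQdef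
  have Qe : ∀ (c r : ℕ) (hw : wok h c r), c % 2 = 0 → Q (wv h c r hw) := by
    intro c r hw hc hmem
    rw [mem_scut_iff] at hmem
    omega
  have Q0 : ∀ (c : ℕ) (hw : wok h c 0), Q (wv h c 0 hw) := by
    intro c hw hmem
    rw [mem_scut_iff] at hmem
    have := ht (c / 2)
    omega
  have Q3 : ∀ (c : ℕ) (hw : wok h c 3), Q (wv h c 3 hw) := by
    intro c hw hmem
    rw [mem_scut_iff] at hmem
    have := ht (c / 2)
    omega
  have Qc : ∀ (r : ℕ) (hw : wok h (2*i+1) r), Q (wv h (2*i+1) r hw) := by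
    intro r hw hmem
    rw [mem_scut_iff] at hmem
    rw [wv_eq_iff]
    have : (2*i+1)/2 = i := by omega
    rw [this] at hmem
    exact ⟨rfl, hmem.2⟩
  rcases Nat.lt_or_ge h 3 with hlt | h3
  · -- case h = 2
    have he2 : h = 2 := by omega
    subst he2
    have ht1 : t 1 = 1 := h2 rfl
    have hQ32 : Q (wv 2 3 2 (by unfold wok; omega)) := by
      intro hmem
      rw [mem_scut_iff] at hmem
      norm_num at hmem
      omega
    -- common start : a → (0,0)
    have W1 : WCon (wall 2) Q (wv 2 0 1 hwa) (wv 2 0 0 (by unfold wok; omega)) :=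
      WCon.adj (wadj_v 2 0 0 (by omega) _ _).symm (Qe _ _ _ (by omega)) (Q0 _ _)
    have hi' : i = 0 ∨ i = 1 ∨ i = 2 := by omega
    rcases hi' with rfl | rfl | rfl
    · -- i = 0 : through column 1
      refine (W1.trans ?_)
      have R0 : WCon (wall 2) Q (wv 2 0 0 (by unfold wok; omega)) (wv 2 2 0 (by unfold wok; omega)) :=
        con_row' 2 Q 0 0 2 (fun j h1 h2 => by unfold wok; omega) (fun j h1 h2 => Q0 _ _)
          (by unfold wok; omega) (by unfold wok; omega)
      refine R0.trans ?_
      refine (WCon.adj (wadj_v 2 2 0 (by omega) (by unfold wok; omega) (by unfold wok; omega))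
        (Q0 _ _) (Qe _ _ _ (by omega))).trans ?_
      refine (WCon.adj (wadj_h 2 1 1 (by unfold wok; omega) (by unfold wok; omega)).symm
        (Qe _ _ _ (by omega)) (Qc _ _)).trans ?_
      refine (WCon.adj (wadj_v 2 1 1 (by omega) (by unfold wok; omega) (by unfold wok; omega))
        (Qc _ _) (Qc _ _)).trans ?_
      exact WCon.adj (wadj_h 2 1 2 (by unfold wok; omega) hwb) (Qc _ _) (Qe _ _ _ (by omega))
    · -- i = 1 : through column 3 (t 1 = 1)
      refine (W1.trans ?_)
      have R0 : WCon (wall 2) Q (wv 2 0 0 (by unfold wok; omega)) (wv 2 2 0 (by unfold wok; omega)) :=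
        con_row' 2 Q 0 0 2 (fun j h1 h2 => by unfold wok; omega) (fun j h1 h2 => Q0 _ _)
          (by unfold wok; omega) (by unfold wok; omega)
      refine R0.trans ?_
      refine (WCon.adj (wadj_v 2 2 0 (by omega) (by unfold wok; omega) (by unfold wok; omega))
        (Q0 _ _) (Qe _ _ _ (by omega))).trans ?_
      refine (WCon.adj (wadj_h 2 2 1 (by unfold wok; omega) (by unfold wok; omega))
        (Qe _ _ _ (by omega)) (Qc _ _)).trans ?_
      refine (WCon.adj (wadj_v 2 3 1 (by omega) (by unfold wok; omega) (by unfold wok; omega))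
        (Qc _ _) (Qc _ _)).trans ?_
      exact WCon.adj (wadj_h 2 2 2 hwb (by unfold wok; omega)).symm (Qc _ _) (Qe _ _ _ (by omega))
    · -- i = 2 : through column 5
      refine (W1.trans ?_)
      have R0 : WCon (wall 2) Q (wv 2 0 0 (by unfold wok; omega)) (wv 2 4 0 (by unfold wok; omega)) :=
        con_row' 2 Q 0 0 4 (fun j h1 h2 => by unfold wok; omega) (fun j h1 h2 => Q0 _ _)
          (by unfold wok; omega) (by unfold wok; omega)
      refine R0.trans ?_
      refine (WCon.adj (wadj_v 2 4 0 (by omega) (by unfold wok; omega) (by unfold wok; omega))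
        (Q0 _ _) (Qe _ _ _ (by omega))).trans ?_
      refine (WCon.adj (wadj_h 2 4 1 (by unfold wok; omega) (by unfold wok; omega))
        (Qe _ _ _ (by omega)) (Qc _ _)).trans ?_
      refine (WCon.adj (wadj_v 2 5 1 (by omega) (by unfold wok; omega) (by unfold wok; omega))
        (Qc _ _) (Qc _ _)).trans ?_
      refine (WCon.adj (wadj_h 2 4 2 (by unfold wok; omega) (by unfold wok; omega)).symm
        (Qc _ _) (Qe _ _ _ (by omega))).trans ?_
      refine (WCon.adj (wadj_h 2 3 2 (by unfold wok; omega) (by unfold wok; omega)).symm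
        (Qe _ _ _ (by omega)) hQ32).trans ?_
      exact WCon.adj (wadj_h 2 2 2 hwb (by unfold wok; omega)).symm hQ32 (Qe _ _ _ (by omega))
  · -- case 3 ≤ h : route through row 3
    have W1 : WCon (wall h) Q (wv h 0 1 hwa) (wv h 0 0 (by unfold wok; omega)) :=
      WCon.adj (wadj_v h 0 0 (by omega) _ _).symm (Qe _ _ _ (by omega)) (Q0 _ _)
    refine W1.trans ?_
    have R0 : WCon (wall h) Q (wv h 0 0 (by unfold wok; omega)) (wv h (2*i) 0 (by unfold wok; omega)) :=
      con_row' h Q 0 0 (2*i) (fun j h1 h2 => by unfold wok; omega) (fun j h1 h2 => Q0 _ _)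
        (by unfold wok; omega) (by unfold wok; omega)
    refine R0.trans ?_
    refine (WCon.adj (wadj_v h (2*i) 0 (by omega) (by unfold wok; omega) (by unfold wok; omega))
      (Q0 _ _) (Qe _ _ _ (by omega))).trans ?_
    refine (WCon.adj (wadj_h h (2*i) 1 (by unfold wok; omega) (by unfold wok; omega))
      (Qe _ _ _ (by omega)) (Qc _ _)).trans ?_
    refine (WCon.adj (wadj_v h (2*i+1) 1 (by omega) (by unfold wok; omega) (by unfold wok; omega))
      (Qc _ _) (Qc _ _)).trans ?_
    refine (WCon.adj (wadj_h h (2*i) 2 (by unfold wok; omega) (by unfold wok; omega)).symm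
      (Qc _ _) (Qe _ _ _ (by omega))).trans ?_
    refine (WCon.adj (wadj_v h (2*i) 2 (by omega) (by unfold wok; omega) (by unfold wok; omega))
      (Qe _ _ _ (by omega)) (Q3 _ _)).trans ?_
    have R3 : WCon (wall h) Q (wv h (2*i) 3 (by unfold wok; omega)) (wv h 2 3 (by unfold wok; omega)) :=
      con_row' h Q 3 (2*i) 2 (fun j h1 h2 => by unfold wok; omega) (fun j h1 h2 => Q3 _ _)
        (by unfold wok; omega) (by unfold wok; omega)
    refine R3.trans ?_
    exact WCon.adj (wadj_v h 2 2 (by omega) hwb (by unfold wok; omega)).symm (Q3 _ _) (Qe _ _ _ (by omega))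

lemma wok_a {h : ℕ} (hh : 2 ≤ h) : wok h 0 1 := by unfold wok; omega
lemma wok_b {h : ℕ} (hh : 2 ≤ h) : wok h 2 2 := by unfold wok; omega
lemma wok_s {h : ℕ} (hh : 2 ≤ h) {i r : ℕ} (hi : i ≤ h) (hr : r = 1 ∨ r = 2) :
    wok h (2*i+1) r := by unfold wok; omega

theorem isMinSep_scut (h : ℕ) (hh : 2 ≤ h) (t : ℕ → ℕ)
    (ht : ∀ i, t i = 1 ∨ t i = 2) (h2 : h = 2 → t 1 = 1) :
    IsMinSep (wall h) (Scut h t) := by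
  refine ⟨wv h 0 1 (wok_a hh), wv h 2 2 (wok_b hh), ?_, ?_, ?_, ?_, ?_, ?_⟩
  · -- a ≠ b
    rw [Ne, wv_eq_iff]
    omega
  · -- ¬ Adj a b
    intro hadj
    have hel := wp_adj_elim ((wall_adj_iff _ _).mp hadj)
    have e1 : ((wv h 0 1 (wok_a hh)).1.1 : ℕ) = 0 := rfl
    have e2 : ((wv h 0 1 (wok_a hh)).1.2 : ℕ) = 1 := rfl
    have e3 : ((wv h 2 2 (wok_b hh)).1.1 : ℕ) = 2 := rfl
    have e4 : ((wv h 2 2 (wok_b hh)).1.2 : ℕ) = 2 := rfl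
    omega
  · -- a ∉ S
    rw [mem_scut_iff]
    omega
  · -- b ∉ S
    rw [mem_scut_iff]
    omega
  · -- Separates
    refine separates_of_invariant (fun v => (v.1.2 : ℕ) ≤ 1) ?_ (by simp) (by simp)
    intro u v hadj hu hv
    have he := wp_adj_elim ((wall_adj_iff _ _).mp hadj)
    rcases he with ⟨h1, -⟩ | ⟨h1, (⟨h2', h3⟩ | ⟨h2', h3⟩)⟩
    · omega
    · -- v is above u
      rcases eq_or_ne (u.1.2 : ℕ) 1 with hr1 | hr1
      · -- crossing edge : the cut blocks it
        exfalso
        rcases ht ((u.1.1 : ℕ) / 2) with hti | hti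
        · exact hu ⟨by omega, by omega⟩
        · refine hv ⟨by omega, ?_⟩
          rw [← h1]
          omega
      · omega
    · -- u is above v
      rcases eq_or_ne (v.1.2 : ℕ) 1 with hr1 | hr1
      · exfalso
        rcases ht ((v.1.1 : ℕ) / 2) with hti | hti
        · exact hv ⟨by omega, by omega⟩
        · refine hu ⟨by omega, ?_⟩
          rw [h1]
          omega
      · omega
  · -- minimality
    intro T hT hsep
    obtain ⟨s, hsS, hsT⟩ := Set.exists_of_ssubset hT
    have hodd : ((s.1.1 : ℕ)) % 2 = 1 := hsS.1
    set i : ℕ := (s.1.1 : ℕ) / 2 with hidef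
    have hilt : i ≤ h := by
      have := s.1.1.isLt
      omega
    have hcol : (s.1.1 : ℕ) = 2*i+1 := by omega
    have hrow : (s.1.2 : ℕ) = t i := hsS.2
    have hs_eq : s = wv h (2*i+1) (t i) (wok_s hh hilt (ht i)) := eq_wv s hcol hrow _
    have W : WCon (wall h) (fun x => x ∉ T) (wv h 0 1 (wok_a hh)) (wv h 2 2 (wok_b hh)) := by
      refine (wcon_through h hh t ht h2 i hilt (wok_a hh) (wok_b hh) (wok_s hh hilt (ht i))).mono ?_
      intro x hx hxT
      have hxS : x ∈ Scut h t := hT.subset hxT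
      have := hx hxS
      rw [← hs_eq] at this
      subst this
      exact hsT hxT
    exact not_separates_of_wcon W hsep

lemma scut_ne {h : ℕ} (hh : 2 ≤ h) (t t' : ℕ → ℕ) (i : ℕ) (hi : i ≤ h)
    (h1 : t i = 1 ∨ t i = 2) (hne : t i ≠ t' i) : Scut h t ≠ Scut h t' := by
  intro he
  have hd : (2*i+1)/2 = i := by omega
  have hv : wv h (2*i+1) (t i) (wok_s hh hi h1) ∈ Scut h t :=
    (mem_scut_iff _).mpr ⟨by omega, by rw [hd]⟩
  rw [he, mem_scut_iff, hd] at hv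
  exact hne hv.2


theorem stmt14 (h : ℕ) (hh : 2 ≤ h) : 2 ^ h ≤ numMinSeps (wall h) := by
  classical
  set tf : (Fin h → Bool) → ℕ → ℕ := fun f i =>
    if h = 2 then (if i = 0 then (if f ⟨0, by omega⟩ then 1 else 2)
      else if i = 2 then (if f ⟨1, by omega⟩ then 1 else 2) else 1)
    else if hi : i < h then (if f ⟨i, hi⟩ then 1 else 2) else 1 with htf
  have htf12 : ∀ f i, tf f i = 1 ∨ tf f i = 2 := by
    intro f i
    simp only [tf]
    split_ifs <;> simp
  have htf2 : ∀ f, h = 2 → tf f 1 = 1 := by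
    intro f he
    simp [tf, he]
  set F : (Fin h → Bool) → Set (WVert h) := fun f => Scut h (tf f) with hF
  have hinj : Function.Injective F := by
    intro f f' he
    by_contra hne
    have hex : ∃ j : Fin h, f j ≠ f' j := by
      by_contra hc
      push_neg at hc
      exact hne (funext hc)
    obtain ⟨j, hj⟩ := hex
    rcases eq_or_ne h 2 with h2 | h2
    · subst h2
      have hj2 : (j : ℕ) = 0 ∨ (j : ℕ) = 1 := by omega
      rcases hj2 with hj0 | hj1
      · refine scut_ne hh (tf f) (tf f') 0 (by omega) (htf12 f 0) ?_ he
        have : (⟨0, by omega⟩ : Fin 2) = j := by exact Fin.ext hj0.symm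
        simp only [tf, if_pos rfl, this]
        rcases Bool.eq_false_or_eq_true (f j) with hb | hb <;>
          rcases Bool.eq_false_or_eq_true (f' j) with hb' | hb' <;>
            simp [hb, hb'] <;> simp [hb, hb'] at hj ⊢
      · refine scut_ne hh (tf f) (tf f') 2 (by omega) (htf12 f 2) ?_ he
        have : (⟨1, by omega⟩ : Fin 2) = j := by exact Fin.ext hj1.symm
        simp only [tf, if_pos rfl, this]
        rcases Bool.eq_false_or_eq_true (f j) with hb | hb <;>
          rcases Bool.eq_false_or_eq_true (f' j) with hb' | hb' <;>
            simp [hb, hb'] <;> simp [hb, hb'] at hj ⊢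
    · refine scut_ne hh (tf f) (tf f') (j : ℕ) (le_of_lt (lt_of_lt_of_le j.isLt le_rfl)) (htf12 f j) ?_ he
      simp only [tf, if_neg h2, dif_pos j.isLt]
      have : (⟨(j:ℕ), j.isLt⟩ : Fin h) = j := Fin.ext rfl
      rw [this]
      rcases Bool.eq_false_or_eq_true (f j) with hb | hb <;>
        rcases Bool.eq_false_or_eq_true (f' j) with hb' | hb' <;>
          simp [hb, hb'] <;> simp [hb, hb'] at hj ⊢
  have hsub : Set.range F ⊆ {S | IsMinSep (wall h) S} := by
    rintro _ ⟨f, rfl⟩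
    exact isMinSep_scut h hh (tf f) (htf12 f) (htf2 f)
  have h1 : (Set.range F).ncard = 2 ^ h := by
    rw [← Set.image_univ, Set.ncard_image_of_injective _ hinj, Set.ncard_univ]
    simp [Nat.card_eq_fintype_card]
  calc 2 ^ h = (Set.range F).ncard := h1.symm
    _ ≤ numMinSeps (wall h) := Set.ncard_le_ncard hsub (Set.toFinite _)
end

section
/- Let G be a {P_2+2P_1, C_4}-free graph with an independent set I of size at least 4 that is maximal (every vertex outside I has a neighbor in I), such that G has no universal vertex. Then G is a split graph: V(G) partitions into the independent set I and a clique X, where X = V(G) \ I. -/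
open SimpleGraph

variable {V : Type*}

/-- `G` has no induced `P₂ + 2P₁` (an edge plus two isolated vertices). -/
def P2TwoP1Free (G : SimpleGraph V) : Prop :=
  ¬ ∃ a b c d : V, a ≠ b ∧ a ≠ c ∧ a ≠ d ∧ b ≠ c ∧ b ≠ d ∧ c ≠ d ∧
    G.Adj a b ∧ ¬ G.Adj a c ∧ ¬ G.Adj a d ∧ ¬ G.Adj b c ∧ ¬ G.Adj b d ∧ ¬ G.Adj c d

/-- `G` has no induced 4-cycle. -/
def C4Free (G : SimpleGraph V) : Prop :=
  ¬ ∃ a b c d : V, a ≠ b ∧ a ≠ c ∧ a ≠ d ∧ b ≠ c ∧ b ≠ d ∧ c ≠ d ∧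
    G.Adj a b ∧ G.Adj b c ∧ G.Adj c d ∧ G.Adj d a ∧ ¬ G.Adj a c ∧ ¬ G.Adj b d

theorem stmt16 (G : SimpleGraph V) [Fintype V]
    (h1 : P2TwoP1Free G) (h2 : C4Free G)
    (I : Set V) (hind : ∀ x ∈ I, ∀ y ∈ I, ¬ G.Adj x y)
    (hmax : ∀ v : V, v ∉ I → ∃ u ∈ I, G.Adj v u)
    (hcard : 4 ≤ I.ncard)
    (huniv : ¬ ∃ v : V, ∀ w, w ≠ v → G.Adj v w) :
    ∀ x ∈ Iᶜ, ∀ y ∈ Iᶜ, x ≠ y → G.Adj x y := by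
  intro x hx y hy hxy
  by_contra hadj
  have hmiss : ∀ z : V, z ∉ I → {c | c ∈ I ∧ ¬ G.Adj z c}.Subsingleton := by
    intro z hz c hc d hd
    by_contra hcd
    obtain ⟨u, hu, hzu⟩ := hmax z hz
    have huc : u ≠ c := fun h => hc.2 (h ▸ hzu)
    have hud : u ≠ d := fun h => hd.2 (h ▸ hzu)
    exact h1 ⟨z, u, c, d, G.ne_of_adj hzu, fun h => hz (h ▸ hc.1),
      fun h => hz (h ▸ hd.1), huc, hud, hcd, hzu, hc.2, hd.2,
      hind u hu c hc.1, hind u hu d hd.1, hind c hc.1 d hd.1⟩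
  set Sx := {c | c ∈ I ∧ ¬ G.Adj x c} with hSx
  set Sy := {c | c ∈ I ∧ ¬ G.Adj y c} with hSy
  have hx' : x ∉ I := hx
  have hy' : y ∉ I := hy
  have hSxcard : Sx.ncard ≤ 1 := by
    rw [hSx, Set.ncard_le_one_iff]; exact fun ha hb => hmiss x hx' ha hb
  have hSycard : Sy.ncard ≤ 1 := by
    rw [hSy, Set.ncard_le_one_iff]; exact fun ha hb => hmiss y hy' ha hb
  have hsubI : Sx ∪ Sy ⊆ I := by
    rintro c (hc | hc) <;> exact hc.1
  have hdiff : 1 < (I \ (Sx ∪ Sy)).ncard := by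
    have h := Set.ncard_diff hsubI (Set.toFinite _)
    have hu : (Sx ∪ Sy).ncard ≤ 2 := le_trans (Set.ncard_union_le _ _) (by omega)
    omega
  obtain ⟨d, e, hd, he, hde⟩ := (Set.one_lt_ncard_iff (Set.toFinite _)).mp hdiff
  obtain ⟨hdI, hdn⟩ := hd
  obtain ⟨heI, hen⟩ := he
  have hxd : G.Adj x d := by
    by_contra h; exact hdn (Or.inl ⟨hdI, h⟩)
  have hyd : G.Adj y d := by
    by_contra h; exact hdn (Or.inr ⟨hdI, h⟩)
  have hxe : G.Adj x e := by
    by_contra h; exact hen (Or.inl ⟨heI, h⟩)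
  have hye : G.Adj y e := by
    by_contra h; exact hen (Or.inr ⟨heI, h⟩)
  exact h2 ⟨x, d, y, e, fun h => hx' (h ▸ hdI), hxy, fun h => hx' (h ▸ heI),
    fun h => hy' (h.symm ▸ hdI), hde, fun h => hy' (h ▸ heI),
    hxd, hyd.symm, hye, hxe.symm, hadj, hind d hdI e heI⟩
end
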